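/- arXiv:2204.12786 — 15 statements merged into one kernel-verified Lean document; each statement's English description precedes it below -/
import Mathlib

section
/- Let X be a real normed vector space and f ∈ C¹(X, X). Then f is a machine (i.e., for every real normed vector space X₀ and every g ∈ C¹(X₀, X) there exists a unique h ∈ C¹(X₀, X) with h = g + f ∘ h) if and only if the map id − f : X → X is bijective with continuously differentiable inverse. Moreover, whenever this is the case, writing R_f = (id − f)⁻¹, a map h ∈ C¹(X₀, X) satisfies h = g + f ∘ h if and only if h = R_f ∘ g. -/
universe u

/-- A continuously differentiable endofunction `f` of a real normed vector space `X` is a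
*machine* if for every real normed vector space `X₀` and every `C¹` map `g : X₀ → X` there is a
unique `C¹` map `h : X₀ → X` satisfying the machine equation `h = g + f ∘ h`. -/
def IsMachine {X : Type u} [NormedAddCommGroup X] [NormedSpace ℝ X] (f : X → X) : Prop :=
  ∀ (X₀ : Type u) [NormedAddCommGroup X₀] [NormedSpace ℝ X₀] (g : X₀ → X),
    ContDiff ℝ 1 g →
      ∃! h : X₀ → X, ContDiff ℝ 1 h ∧ ∀ t, h t = g t + f (h t)

/-- A `C¹` endofunction `f` of a real normed vector space is a machine if and
only if `id − f` is bijective with continuously differentiable inverse; moreover, whenever `R`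
is such an inverse (the resolvent `R_f`), a `C¹` map `h` satisfies `h = g + f ∘ h` iff
`h = R ∘ g`. -/
theorem machine_iff_id_sub_invertible {X : Type u} [NormedAddCommGroup X] [NormedSpace ℝ X]
    (f : X → X) (hf : ContDiff ℝ 1 f) :
    (IsMachine f ↔
      ∃ R : X → X, ContDiff ℝ 1 R ∧
        Function.LeftInverse R (fun x => x - f x) ∧
        Function.RightInverse R (fun x => x - f x)) ∧
    (∀ R : X → X, ContDiff ℝ 1 R →
      Function.LeftInverse R (fun x => x - f x) →
      Function.RightInverse R (fun x => x - f x) →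
      ∀ (X₀ : Type u) [NormedAddCommGroup X₀] [NormedSpace ℝ X₀] (g h : X₀ → X),
        ContDiff ℝ 1 g → ContDiff ℝ 1 h →
        ((∀ t, h t = g t + f (h t)) ↔ h = R ∘ g)) := by
  constructor
  · constructor
    · intro hm
      obtain ⟨h, ⟨hC, heq⟩, huniq⟩ := hm X id contDiff_id
      have hFh : ∀ x, h x - f (h x) = x := by
        intro x
        have := heq x
        simp only [id_eq] at this
        exact sub_eq_of_eq_add this
      have hinj : Function.Injective (fun x => x - f x) := by
        intro a b hab
        simp only at hab
        obtain ⟨k, ⟨kC, keq⟩, kuniq⟩ := hm X (fun _ => a - f a) contDiff_const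
        have ha : (fun _ : X => a) = k :=
          kuniq (fun _ => a) ⟨contDiff_const, fun t => by abel⟩
        have hb : (fun _ : X => b) = k :=
          kuniq (fun _ => b) ⟨contDiff_const, fun t => by rw [hab]; abel⟩
        exact congrFun (ha.trans hb.symm) a
      refine ⟨h, hC, ?_, ?_⟩
      · intro x
        apply hinj
        simp only
        exact hFh (x - f x)
      · intro x
        exact hFh x
    · rintro ⟨R, RC, Rl, Rr⟩
      intro X₀ _ _ g gC
      refine ⟨R ∘ g, ⟨RC.comp gC, fun t => ?_⟩, fun h ⟨hC, heq⟩ => ?_⟩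
      · have := Rr (g t)
        simp only [Function.comp_apply] at this ⊢
        exact eq_add_of_sub_eq this
      · funext t
        have h1 : h t - f (h t) = g t := by exact sub_eq_of_eq_add (heq t)
        have := Rl (h t)
        simp only [h1, Function.comp_apply] at this ⊢
        exact this.symm
  · intro R RC Rl Rr X₀ _ _ g h gC hC
    constructor
    · intro heq
      funext t
      have h1 : h t - f (h t) = g t := by exact sub_eq_of_eq_add (heq t)
      have := Rl (h t)
      simp only [h1, Function.comp_apply] at this ⊢
      exact this.symm
    · intro he t
      rw [he]
      have := Rr (g t)
      simp only [Function.comp_apply] at this ⊢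
      exact eq_add_of_sub_eq this
end

section
/- Let X be a real normed vector space, f ∈ C¹(X, X) a machine, and let X ⊇ V₀ ⊇ V₁ ⊇ … ⊇ V_d = 0 be a depth cofiltration of length d for f. For a closed subspace V ⊆ X let V^⊥ = {φ ∈ X* : φ(v) = 0 for all v ∈ V} denote its annihilator in the continuous dual X*. Then for every x₀ ∈ X, the sequence X* ⊇ V_{d−1}^⊥ ⊇ V_{d−2}^⊥ ⊇ … ⊇ V₀^⊥ ⊇ 0 is a depth cofiltration of length d for the dual operator (Df(x₀))* ∈ B(X*, X*). -/
universe u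

/-- A depth cofiltration of length `d` for `f : X → X`: a decreasing sequence of closed
subspaces `X ⊇ V₀ ⊇ V₁ ⊇ … ⊇ V_d = 0` with quotient projections `π_i : X → X/V_i` such that
`π₀ ∘ f = 0` and, for every `i ∈ {1, …, d}`, there is a `C¹` map
`f̃_i : X/V_{i−1} → X/V_i` with `π_i ∘ f = f̃_i ∘ π_{i−1}`. -/
def IsDepthCofiltration {X : Type u} [NormedAddCommGroup X] [NormedSpace ℝ X]
    (f : X → X) (d : ℕ) (V : Fin (d + 1) → Submodule ℝ X) : Prop :=
  ∃ hV : ∀ i, IsClosed ((V i : Set X)),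
    Antitone V ∧ V (Fin.last d) = ⊥ ∧ (∀ x, (V 0).mkQ (f x) = 0) ∧
    ∀ i : Fin d,
      letI := hV i.castSucc
      letI := hV i.succ
      ∃ ft : (X ⧸ V i.castSucc) → (X ⧸ V i.succ),
        ContDiff ℝ 1 ft ∧ ∀ x, (V i.succ).mkQ (f x) = ft ((V i.castSucc).mkQ x)

/-- The dual (adjoint) of a bounded linear operator `T : X → Y`, acting between the continuous
duals `Y* = B(Y, ℝ)` and `X* = B(X, ℝ)` by precomposition. -/
noncomputable def dualOp {X Y : Type*} [NormedAddCommGroup X] [NormedSpace ℝ X]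
    [NormedAddCommGroup Y] [NormedSpace ℝ Y] (T : X →L[ℝ] Y) :
    (Y →L[ℝ] ℝ) →L[ℝ] (X →L[ℝ] ℝ) :=
  (ContinuousLinearMap.compL ℝ X Y ℝ).flip T

/-- The annihilator `V^⊥ = {φ ∈ X* : φ(v) = 0 for all v ∈ V}` of a subspace `V ⊆ X` inside
the continuous dual `X* = B(X, ℝ)`. -/
noncomputable def annihilator {X : Type u} [NormedAddCommGroup X] [NormedSpace ℝ X]
    (V : Submodule ℝ X) : Submodule ℝ (X →L[ℝ] ℝ) where
  carrier := {φ | ∀ v ∈ V, φ v = 0}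
  add_mem' := by intro a b ha hb v hv; simp [ha v hv, hb v hv]
  zero_mem' := by intro v hv; simp
  smul_mem' := by intro c a ha v hv; simp [ha v hv]

section auxSect
variable {X : Type u} [NormedAddCommGroup X] [NormedSpace ℝ X]

lemma mem_annihilator {V : Submodule ℝ X} {φ : X →L[ℝ] ℝ} :
    φ ∈ annihilator V ↔ ∀ v ∈ V, φ v = 0 := Iff.rfl

lemma annihilator_isClosed (V : Submodule ℝ X) :
    IsClosed ((annihilator V : Set (X →L[ℝ] ℝ))) := by
  have : ((annihilator V : Set (X →L[ℝ] ℝ))) = ⋂ v ∈ V, {φ : X →L[ℝ] ℝ | φ v = 0} := by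
    ext φ; simp [annihilator]
  rw [this]
  exact isClosed_biInter fun v _ =>
    isClosed_eq (ContinuousLinearMap.apply ℝ ℝ v).continuous continuous_const

lemma fderiv_mem_of_quot {f : X → X} (hf : ContDiff ℝ 1 f) {V W : Submodule ℝ X}
    [IsClosed (V : Set X)] [IsClosed (W : Set X)]
    (ft : (X ⧸ V) → (X ⧸ W)) (hft : ContDiff ℝ 1 ft)
    (h : ∀ x, W.mkQ (f x) = ft (V.mkQ x)) (x₀ : X) {v : X} (hv : v ∈ V) :
    fderiv ℝ f x₀ v ∈ W := by
  let Wq : X →L[ℝ] X ⧸ W := ⟨W.mkQ, continuous_quot_mk⟩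
  let Vq : X →L[ℝ] X ⧸ V := ⟨V.mkQ, continuous_quot_mk⟩
  have hdf : DifferentiableAt ℝ f x₀ := (hf.differentiable one_ne_zero) x₀
  have hdft : DifferentiableAt ℝ ft (Vq x₀) := (hft.differentiable one_ne_zero) _
  have e1 : (fun x => Wq (f x)) = fun x => ft (Vq x) := funext fun x => h x
  have h2 : fderiv ℝ (fun x => Wq (f x)) x₀ = Wq.comp (fderiv ℝ f x₀) := by
    rw [show (fun x => Wq (f x)) = Wq ∘ f from rfl,
      fderiv_comp x₀ Wq.differentiableAt hdf, ContinuousLinearMap.fderiv]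
  have h3 : fderiv ℝ (fun x => ft (Vq x)) x₀ = (fderiv ℝ ft (Vq x₀)).comp Vq := by
    rw [show (fun x => ft (Vq x)) = ft ∘ Vq from rfl,
      fderiv_comp x₀ hdft Vq.differentiableAt, ContinuousLinearMap.fderiv]
  have key : Wq.comp (fderiv ℝ f x₀) = (fderiv ℝ ft (Vq x₀)).comp Vq := by
    rw [← h2, ← h3, e1]
  have := congrArg (fun (L : X →L[ℝ] X ⧸ W) => L v) key
  simp only [ContinuousLinearMap.comp_apply] at this
  have hv0 : Vq v = 0 := by
    show V.mkQ v = 0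
    simpa [Submodule.Quotient.mk_eq_zero] using hv
  rw [hv0, map_zero] at this
  have : W.mkQ (fderiv ℝ f x₀ v) = 0 := this
  simpa [Submodule.Quotient.mk_eq_zero] using this

lemma fderiv_mem_zero_quot {f : X → X} (hf : ContDiff ℝ 1 f) {V : Submodule ℝ X}
    [IsClosed (V : Set X)]
    (h : ∀ x, V.mkQ (f x) = 0) (x₀ v : X) : fderiv ℝ f x₀ v ∈ V := by
  let Vq : X →L[ℝ] X ⧸ V := ⟨V.mkQ, continuous_quot_mk⟩
  have hdf : DifferentiableAt ℝ f x₀ := (hf.differentiable one_ne_zero) x₀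
  have h2 : fderiv ℝ (fun x => Vq (f x)) x₀ = Vq.comp (fderiv ℝ f x₀) := by
    rw [show (fun x => Vq (f x)) = Vq ∘ f from rfl,
      fderiv_comp x₀ Vq.differentiableAt hdf, ContinuousLinearMap.fderiv]
  have e1 : (fun x => Vq (f x)) = fun _ => (0 : X ⧸ V) := funext fun x => h x
  rw [e1, fderiv_const_apply] at h2
  have := congrArg (fun (L : X →L[ℝ] X ⧸ V) => L v) h2
  simp only [ContinuousLinearMap.comp_apply, ContinuousLinearMap.zero_apply] at this
  have : V.mkQ (fderiv ℝ f x₀ v) = 0 := this.symm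
  simpa [Submodule.Quotient.mk_eq_zero] using this

lemma lift_exists {Y : Type*} [NormedAddCommGroup Y] [NormedSpace ℝ Y]
    (T : Y →L[ℝ] Y) (Wc Ws : Submodule ℝ Y) [IsClosed (Wc : Set Y)] [IsClosed (Ws : Set Y)]
    (hsub : ∀ φ ∈ Wc, T φ ∈ Ws) :
    ∃ ft : (Y ⧸ Wc) → (Y ⧸ Ws), ContDiff ℝ 1 ft ∧ ∀ φ, Ws.mkQ (T φ) = ft (Wc.mkQ φ) := by
  have hker : Wc ≤ LinearMap.ker (Ws.mkQ ∘ₗ (T : Y →ₗ[ℝ] Y)) := fun φ hφ => by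
    simp [LinearMap.mem_ker, Submodule.Quotient.mk_eq_zero, hsub φ hφ]
  let L := Wc.liftQ _ hker
  have hcomp : ∀ φ : Y, L (Wc.mkQ φ) = Ws.mkQ (T φ) := fun φ => by
    simp [L, Submodule.liftQ_apply]
  have hLc : Continuous L := by
    have hq : Topology.IsQuotientMap (Quot.mk _ : Y → Y ⧸ Wc) := isQuotientMap_quot_mk
    refine hq.continuous_iff.mpr ?_
    have : (⇑L ∘ Quot.mk _) = fun φ : Y => Ws.mkQ (T φ) := funext fun φ => hcomp φ
    refine (continuous_congr (fun φ => congrFun this φ)).mpr ?_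
    exact continuous_quot_mk.comp (T.continuous)
  let Lc : (Y ⧸ Wc) →L[ℝ] (Y ⧸ Ws) := ⟨L, hLc⟩
  exact ⟨Lc, Lc.contDiff, fun φ => (hcomp φ).symm⟩

end auxSect


/-- Let `f ∈ C¹(X, X)` be a machine and `X ⊇ V₀ ⊇ … ⊇ V_d = 0` a depth
cofiltration of length `d` for `f`. Then for every `x₀ ∈ X`, the sequence
`X* ⊇ V_{d−1}^⊥ ⊇ … ⊇ V₀^⊥ ⊇ 0` is a depth cofiltration of length `d` for the dual operator
`(Df(x₀))* ∈ B(X*, X*)`. -/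
theorem dual_depthCofiltration {X : Type u} [NormedAddCommGroup X] [NormedSpace ℝ X]
    (f : X → X) (hf : ContDiff ℝ 1 f)
    (hmach : ∀ (X₀ : Type u) [NormedAddCommGroup X₀] [NormedSpace ℝ X₀] (g : X₀ → X),
      ContDiff ℝ 1 g →
        ∃! h : X₀ → X, ContDiff ℝ 1 h ∧ ∀ t, h t = g t + f (h t))
    (d : ℕ) (V : Fin (d + 1) → Submodule ℝ X)
    (hcof : IsDepthCofiltration f d V) (x₀ : X) :
    IsDepthCofiltration (fun φ : X →L[ℝ] ℝ => dualOp (fderiv ℝ f x₀) φ) d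
      (fun i : Fin (d + 1) =>
        if h : (i : ℕ) < d then annihilator (V ⟨d - 1 - (i : ℕ), by omega⟩) else ⊥) := by
  obtain ⟨hV, hanti, hlast, hzero, hstep⟩ := hcof
  set T : X →L[ℝ] X := fderiv ℝ f x₀ with hT
  have hTapp : ∀ (φ : X →L[ℝ] ℝ) (v : X), dualOp T φ v = φ (T v) := fun φ v => rfl
  -- T maps everything into V 0
  have hT0 : ∀ v : X, T v ∈ V 0 := by
    intro v
    letI := hV 0
    exact fderiv_mem_zero_quot hf hzero x₀ v
  -- T maps V k.castSucc into V k.succ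
  have hTstep : ∀ (k : Fin d) (v : X), v ∈ V k.castSucc → T v ∈ V k.succ := by
    intro k v hv
    letI := hV k.castSucc
    letI := hV k.succ
    obtain ⟨ft, hft, hfe⟩ := hstep k
    exact fderiv_mem_of_quot hf ft hft hfe x₀ hv
  set W : Fin (d + 1) → Submodule ℝ (X →L[ℝ] ℝ) :=
    (fun i : Fin (d + 1) =>
      if h : (i : ℕ) < d then annihilator (V ⟨d - 1 - (i : ℕ), by omega⟩) else ⊥) with hWdef
  have hWclosed : ∀ i, IsClosed ((W i : Set (X →L[ℝ] ℝ))) := by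
    intro i
    by_cases h : (i : ℕ) < d
    · rw [hWdef]; simp only [dif_pos h]; exact annihilator_isClosed _
    · rw [hWdef]; simp only [dif_neg h, Submodule.bot_coe]; exact isClosed_singleton
  refine ⟨hWclosed, ?_, ?_, ?_, ?_⟩
  · -- Antitone
    intro i j hij
    by_cases hj : (j : ℕ) < d
    · have hi : (i : ℕ) < d := lt_of_le_of_lt hij hj
      rw [hWdef]
      simp only [dif_pos hj, dif_pos hi]
      intro φ hφ v hv
      have hij' : (i : ℕ) ≤ (j : ℕ) := hij
      have hle : V ⟨d - 1 - (i : ℕ), by omega⟩ ≤ V ⟨d - 1 - (j : ℕ), by omega⟩ := by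
        apply hanti
        show (⟨d - 1 - (j : ℕ), by omega⟩ : Fin (d + 1)) ≤ ⟨d - 1 - (i : ℕ), by omega⟩
        simp only [Fin.mk_le_mk]
        omega
      exact hφ v (hle hv)
    · rw [hWdef]; simp only [dif_neg hj]; exact bot_le
  · -- W last = ⊥
    rw [hWdef]
    simp only [Fin.val_last, lt_self_iff_false, dif_neg, not_false_eq_true]
  · -- π₀ ∘ T* = 0
    intro φ
    have : dualOp T φ ∈ W 0 := by
      rcases Nat.eq_zero_or_pos d with hd | hd
      · rw [hWdef]
        have h0 : ¬ ((0 : Fin (d + 1)) : ℕ) < d := by simp [hd]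
        simp only [dif_neg h0, Submodule.mem_bot]
        have hV0 : V 0 = ⊥ := by
          have : (0 : Fin (d + 1)) = Fin.last d := by
            subst hd; rfl
          rw [this, hlast]
        ext v
        rw [hTapp]
        have : T v = 0 := by
          have := hT0 v
          rw [hV0] at this
          simpa using this
        simp [this]
      · rw [hWdef]
        have h0 : ((0 : Fin (d + 1)) : ℕ) < d := by simpa using hd
        simp only [dif_pos h0]
        intro v hv
        rw [hTapp]
        set k : Fin d := ⟨d - 1, by omega⟩ with hk
        have hcs : k.castSucc = (⟨d - 1 - ((0 : Fin (d + 1)) : ℕ), by omega⟩ : Fin (d + 1)) := by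
          apply Fin.ext
          simp [hk]
        have hsc : k.succ = Fin.last d := by
          apply Fin.ext
          simp [hk]
          omega
        have hTv : T v ∈ V k.succ := hTstep k v (by rw [hcs]; exact hv)
        rw [hsc, hlast] at hTv
        have : T v = 0 := by simpa using hTv
        simp [this]
    simpa [Submodule.Quotient.mk_eq_zero] using (Submodule.Quotient.mk_eq_zero (W 0)).mpr this
  · -- step condition
    intro i
    letI := hWclosed i.castSucc
    letI := hWclosed i.succ
    have hic : ((i.castSucc : Fin (d + 1)) : ℕ) < d := by simp [i.isLt]
    apply lift_exists (dualOp T) (W i.castSucc) (W i.succ)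
    intro φ hφ
    rw [hWdef] at hφ
    simp only [dif_pos hic] at hφ
    by_cases hs : ((i.succ : Fin (d + 1)) : ℕ) < d
    · rw [hWdef]
      simp only [dif_pos hs]
      intro v hv
      rw [hTapp]
      have hsv : ((i.succ : Fin (d + 1)) : ℕ) = (i : ℕ) + 1 := by simp
      set k : Fin d := ⟨d - 1 - ((i : ℕ) + 1), by omega⟩ with hk
      have hcs : k.castSucc = (⟨d - 1 - ((i.succ : Fin (d + 1)) : ℕ), by omega⟩ : Fin (d + 1)) := by
        apply Fin.ext
        simp [hk]
      have hsc : k.succ = (⟨d - 1 - ((i.castSucc : Fin (d + 1)) : ℕ), by omega⟩ : Fin (d + 1)) := by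
        apply Fin.ext
        simp [hk]
        omega
      have hTv : T v ∈ V k.succ := hTstep k v (by rw [hcs]; exact hv)
      rw [hsc] at hTv
      exact hφ _ hTv
    · rw [hWdef]
      simp only [dif_neg hs, Submodule.mem_bot]
      have hieq : ((i.castSucc : Fin (d + 1)) : ℕ) = d - 1 := by
        have h1 : ((i.succ : Fin (d + 1)) : ℕ) = (i : ℕ) + 1 := by simp
        have h2 : ((i.castSucc : Fin (d + 1)) : ℕ) = (i : ℕ) := by simp
        have h3 : (i : ℕ) < d := i.isLt
        omega
      have hiv : ((i.castSucc : Fin (d + 1)) : ℕ) = (i : ℕ) := by simp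
      have hV0 : d - 1 - (i : ℕ) = 0 := by omega
      ext v
      rw [hTapp]
      have : T v ∈ V ⟨d - 1 - ((i.castSucc : Fin (d + 1)) : ℕ), by omega⟩ := by
        have h0 : (⟨d - 1 - ((i.castSucc : Fin (d + 1)) : ℕ), by omega⟩ : Fin (d + 1)) = 0 := by
          apply Fin.ext
          simp [hV0]
        rw [h0]
        exact hT0 v
      simp [hφ _ this]
end

section
/- Let X, X₀ be real normed vector spaces and let f ∈ C¹(X, X) admit a depth cofiltration of length d. For any g ∈ C¹(X₀, X) define the iterates h₀ = g and h_i = g + f ∘ h_{i−1} for i ≥ 1. Then h_d = g + f ∘ h_d; that is, the d-th iterate solves the machine equation (equivalently, the iteration stabilizes: h_{d+1} = h_d). -/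
universe u v

/-- Suppose `f ∈ C¹(X, X)` admits a depth cofiltration of length `d`. For
`g ∈ C¹(X₀, X)` define `h₀ = g` and `h_i = g + f ∘ h_{i−1}`. Then `h_d = g + f ∘ h_d`, i.e.
the `d`-th iterate solves the machine equation (equivalently, `h_{d+1} = h_d`). -/
theorem iterates_stabilize {X : Type u} [NormedAddCommGroup X] [NormedSpace ℝ X]
    {X₀ : Type v} [NormedAddCommGroup X₀] [NormedSpace ℝ X₀]
    (f : X → X) (hf : ContDiff ℝ 1 f)
    (d : ℕ) (V : Fin (d + 1) → Submodule ℝ X) (hcof : IsDepthCofiltration f d V)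
    (g : X₀ → X) (hg : ContDiff ℝ 1 g)
    (h : ℕ → X₀ → X)
    (h0 : ∀ t, h 0 t = g t)
    (hrec : ∀ (i : ℕ) (t : X₀), h (i + 1) t = g t + f (h i t)) :
    ∀ t, h d t = g t + f (h d t) := by
  obtain ⟨hV, hanti, hlast, hpi0, hstep⟩ := hcof
  have claim : ∀ i : ℕ, ∀ hi : i < d + 1, ∀ t,
      (V ⟨i, hi⟩).mkQ (h (i + 1) t) = (V ⟨i, hi⟩).mkQ (h i t) := by
    intro i
    induction i with
    | zero =>
      intro hi t
      have : (⟨0, hi⟩ : Fin (d + 1)) = 0 := rfl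
      rw [this, hrec 0 t, map_add, hpi0, add_zero, h0]
    | succ i ih =>
      intro hi t
      have hid : i < d := Nat.lt_of_succ_lt_succ hi
      obtain ⟨ft, _, hft⟩ := hstep ⟨i, hid⟩
      show (V (⟨i, hid⟩ : Fin d).succ).mkQ (h (i + 1 + 1) t)
          = (V (⟨i, hid⟩ : Fin d).succ).mkQ (h (i + 1) t)
      have ih' : (V (⟨i, hid⟩ : Fin d).castSucc).mkQ (h (i + 1) t)
          = (V (⟨i, hid⟩ : Fin d).castSucc).mkQ (h i t) := ih (Nat.lt_of_succ_lt hi) t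
      rw [hrec (i + 1) t, map_add, hft, ih', ← hft, ← map_add, ← hrec i t]
  intro t
  have hd := claim d (Nat.lt_succ_self d) t
  have hlast' : V ⟨d, Nat.lt_succ_self d⟩ = ⊥ := hlast
  rw [hlast'] at hd
  have heq : h (d + 1) t = h d t := by
    have := (Submodule.Quotient.eq (⊥ : Submodule ℝ X)).mp hd
    simpa [sub_eq_zero] using this
  have hfin := hrec d t
  rw [heq] at hfin
  exact hfin
end

section
/- Let X be a real normed vector space and suppose f ∈ C¹(X, X) admits a depth cofiltration of length d for some d ∈ ℕ. Then f is a machine: for every real normed vector space X₀ and every g ∈ C¹(X₀, X) there exists a unique h ∈ C¹(X₀, X) with h = g + f ∘ h. In particular, any two maps h₁, h₂ ∈ C¹(X₀, X) satisfying h₁ = g + f ∘ h₁ and h₂ = g + f ∘ h₂ are equal. -/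
universe u

def MIter {X : Type u} {X₀ : Type u} (f : X → X) (g : X₀ → X) [AddCommGroup X] :
    ℕ → (X₀ → X) → Prop
  | 0, u => ∃ u' : X₀ → X, ∀ t, u t = g t + f (u' t)
  | (i+1), u => ∃ u', MIter f g i u' ∧ ∀ t, u t = g t + f (u' t)

def mseq {X : Type u} {X₀ : Type u} (f : X → X) (g : X₀ → X) [AddCommGroup X] :
    ℕ → X₀ → X
  | 0 => g
  | (n+1) => fun t => g t + f (mseq f g n t)

lemma mseq_miter {X : Type u} {X₀ : Type u} (f : X → X) (g : X₀ → X) [AddCommGroup X] :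
    ∀ (i m : ℕ), i < m → MIter f g i (mseq f g m) := by
  intro i
  induction i with
  | zero =>
    intro m hm
    match m, hm with
    | (m' + 1), _ => exact ⟨mseq f g m', fun t => rfl⟩
  | succ i ih =>
    intro m hm
    match m, hm with
    | (m' + 1), hm => exact ⟨mseq f g m', ih m' (by omega), fun t => rfl⟩

lemma mfix_miter {X : Type u} {X₀ : Type u} (f : X → X) (g h : X₀ → X) [AddCommGroup X]
    (he : ∀ t, h t = g t + f (h t)) : ∀ i, MIter f g i h := by
  intro i
  induction i with
  | zero => exact ⟨h, he⟩
  | succ i ih => exact ⟨h, ih, he⟩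

lemma miter_eq {X : Type u} [NormedAddCommGroup X] [NormedSpace ℝ X]
    {X₀ : Type u} (f : X → X) (d : ℕ) (V : Fin (d + 1) → Submodule ℝ X)
    (hfd : IsDepthCofiltration f d V) (g : X₀ → X) :
    ∀ (i : ℕ) (hi : i < d + 1) (u v : X₀ → X), MIter f g i u → MIter f g i v →
      ∀ t, (V ⟨i, hi⟩).mkQ (u t) = (V ⟨i, hi⟩).mkQ (v t) := by
  obtain ⟨hV, -, -, h0, hstep⟩ := hfd
  intro i
  induction i with
  | zero =>
    rintro hi u v ⟨u', hu⟩ ⟨v', hv⟩ t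
    have h00 : (⟨0, hi⟩ : Fin (d + 1)) = 0 := rfl
    rw [hu t, hv t, h00, map_add, map_add, h0, h0]
  | succ i ih =>
    rintro hi u v ⟨u', hu', hu⟩ ⟨v', hv', hv⟩ t
    have hid : i < d := by omega
    obtain ⟨ft, -, hcomm⟩ := hstep ⟨i, hid⟩
    have hi' : i < d + 1 := by omega
    have hcomm' : ∀ x : X, (V ⟨i + 1, hi⟩).mkQ (f x) = ft ((V ⟨i, hi'⟩).mkQ x) := hcomm
    rw [hu t, hv t, map_add, map_add, hcomm', hcomm', ih hi' u' v' hu' hv' t]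

/-- If `f ∈ C¹(X, X)` admits a depth cofiltration of some finite length `d`,
then `f` is a machine: for every real normed vector space `X₀` and every `g ∈ C¹(X₀, X)` there
is a unique `h ∈ C¹(X₀, X)` with `h = g + f ∘ h`. In particular, any two `C¹` solutions of the
machine equation coincide. -/
theorem finite_depth_implies_machine {X : Type u} [NormedAddCommGroup X] [NormedSpace ℝ X]
    (f : X → X) (hf : ContDiff ℝ 1 f)
    (hfd : ∃ (d : ℕ) (V : Fin (d + 1) → Submodule ℝ X), IsDepthCofiltration f d V) :
    IsMachine f ∧
      ∀ (X₀ : Type u) [NormedAddCommGroup X₀] [NormedSpace ℝ X₀] (g h₁ h₂ : X₀ → X),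
        ContDiff ℝ 1 g → ContDiff ℝ 1 h₁ → ContDiff ℝ 1 h₂ →
        (∀ t, h₁ t = g t + f (h₁ t)) → (∀ t, h₂ t = g t + f (h₂ t)) → h₁ = h₂ := by
  obtain ⟨d, V, hfd⟩ := hfd
  obtain ⟨hV, hanti, hlast, h0, hstep⟩ := hfd
  have hfd' : IsDepthCofiltration f d V := ⟨hV, hanti, hlast, h0, hstep⟩
  have hinj : Function.Injective ((V (Fin.last d)).mkQ) := by
    rw [← LinearMap.ker_eq_bot, Submodule.ker_mkQ, hlast]
  have hdd : d < d + 1 := Nat.lt_succ_self d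
  have hfin : (⟨d, hdd⟩ : Fin (d + 1)) = Fin.last d := rfl
  have uniq : ∀ (X₀ : Type u) [NormedAddCommGroup X₀] [NormedSpace ℝ X₀] (g h₁ h₂ : X₀ → X),
      (∀ t, h₁ t = g t + f (h₁ t)) → (∀ t, h₂ t = g t + f (h₂ t)) → h₁ = h₂ := by
    intro X₀ _ _ g h₁ h₂ e₁ e₂
    funext t
    apply hinj
    have := miter_eq f d V hfd' g d hdd h₁ h₂ (mfix_miter f g h₁ e₁ d) (mfix_miter f g h₂ e₂ d) t
    rwa [hfin] at this
  refine ⟨?_, fun X₀ _ _ g h₁ h₂ _ _ _ e₁ e₂ => uniq X₀ g h₁ h₂ e₁ e₂⟩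
  intro X₀ _ _ g hg
  have hcd : ∀ n, ContDiff ℝ 1 (mseq f g n) := by
    intro n
    induction n with
    | zero => exact hg
    | succ n ih => exact hg.add (hf.comp ih)
  have heq : ∀ t, mseq f g (d + 1) t = g t + f (mseq f g (d + 1) t) := by
    intro t
    apply hinj
    have := miter_eq f d V hfd' g d hdd (mseq f g (d + 1)) (mseq f g (d + 2))
      (mseq_miter f g d (d + 1) (by omega)) (mseq_miter f g d (d + 2) (by omega)) t
    rw [hfin] at this
    exact this
  exact ⟨mseq f g (d + 1), ⟨hcd (d + 1), heq⟩,
    fun y hy => funext fun t => congrFun (uniq X₀ g y (mseq f g (d + 1)) hy.2 heq) t⟩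
end

section
/- Let X be a real normed vector space and let f₁, f₂ ∈ C¹(X, X) be machines with resolvents R_{f₁} and R_{f₂}. If f₁ does not depend on f₂, then f₁ + f₂ is a machine and its resolvent is R_{f₁+f₂} = R_{f₂} ∘ R_{f₁}; that is, id − f₁ − f₂ is bijective with C¹ inverse R_{f₂} ∘ R_{f₁}. -/
universe u

/-- `f₁` *does not depend* on `f₂` if `f₁(x₁ + λ f₂(x₂)) = f₁(x₁)` for all `x₁, x₂ ∈ X` and
all `λ ∈ ℝ`. -/
def DoesNotDependOn {X : Type u} [NormedAddCommGroup X] [NormedSpace ℝ X]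
    (f₁ f₂ : X → X) : Prop :=
  ∀ (x₁ x₂ : X) (lam : ℝ), f₁ (x₁ + lam • f₂ x₂) = f₁ x₁

/-- Let `f₁, f₂ ∈ C¹(X, X)` be machines with resolvents `R₁, R₂` (the `C¹`
two-sided inverses of `id − f₁`, `id − f₂`). If `f₁` does not depend on `f₂`, then `f₁ + f₂`
is a machine and its resolvent is `R₂ ∘ R₁`: i.e. `id − f₁ − f₂` is bijective with `C¹`
inverse `R₂ ∘ R₁`. -/
theorem sum_is_machine_of_not_depend {X : Type u} [NormedAddCommGroup X] [NormedSpace ℝ X]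
    (f₁ f₂ : X → X) (hf₁ : ContDiff ℝ 1 f₁) (hf₂ : ContDiff ℝ 1 f₂)
    (hm₁ : IsMachine f₁) (hm₂ : IsMachine f₂)
    (R₁ R₂ : X → X) (hR₁ : ContDiff ℝ 1 R₁) (hR₂ : ContDiff ℝ 1 R₂)
    (hR₁l : Function.LeftInverse R₁ (fun x => x - f₁ x))
    (hR₁r : Function.RightInverse R₁ (fun x => x - f₁ x))
    (hR₂l : Function.LeftInverse R₂ (fun x => x - f₂ x))
    (hR₂r : Function.RightInverse R₂ (fun x => x - f₂ x))
    (hdep : DoesNotDependOn f₁ f₂) :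
    IsMachine (fun x => f₁ x + f₂ x) ∧
      ContDiff ℝ 1 (R₂ ∘ R₁) ∧
      Function.LeftInverse (R₂ ∘ R₁) (fun x => x - f₁ x - f₂ x) ∧
      Function.RightInverse (R₂ ∘ R₁) (fun x => x - f₁ x - f₂ x) := by
  -- key consequence of non-dependence
  have hkey : ∀ x, f₁ (x - f₂ x) = f₁ x := by
    intro x
    have := hdep x x (-1)
    simpa [sub_eq_add_neg] using this
  -- factorization: (id - f₁ - f₂) x = (id - f₁) ((id - f₂) x)
  have hfact : ∀ x, x - f₁ x - f₂ x = (x - f₂ x) - f₁ (x - f₂ x) := by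
    intro x
    rw [hkey x, sub_right_comm]
  have hLeft : Function.LeftInverse (R₂ ∘ R₁) (fun x => x - f₁ x - f₂ x) := by
    intro x
    simp only [Function.comp_apply]
    rw [hfact x, hR₁l (x - f₂ x), hR₂l x]
  have hRight : Function.RightInverse (R₂ ∘ R₁) (fun x => x - f₁ x - f₂ x) := by
    intro y
    simp only [Function.comp_apply]
    have h2 : R₂ (R₁ y) - f₂ (R₂ (R₁ y)) = R₁ y := hR₂r (R₁ y)
    calc R₂ (R₁ y) - f₁ (R₂ (R₁ y)) - f₂ (R₂ (R₁ y))
        = (R₂ (R₁ y) - f₂ (R₂ (R₁ y))) - f₁ (R₂ (R₁ y) - f₂ (R₂ (R₁ y))) :=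
          hfact (R₂ (R₁ y))
      _ = R₁ y - f₁ (R₁ y) := by rw [h2]
      _ = y := hR₁r y
  have hC : ContDiff ℝ 1 (R₂ ∘ R₁) := hR₂.comp hR₁
  refine ⟨?_, hC, hLeft, hRight⟩
  intro X₀ _ _ g hg
  refine ⟨R₂ ∘ R₁ ∘ g, ⟨hC.comp hg, ?_⟩, ?_⟩
  · intro t
    have := hRight (g t)
    simp only [Function.comp_apply] at this ⊢
    rw [sub_sub, sub_eq_iff_eq_add] at this
    exact this
  · rintro h ⟨hhC, hheq⟩
    funext t
    have h1 : h t - f₁ (h t) - f₂ (h t) = g t := by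
      have := hheq t
      rw [sub_sub, sub_eq_iff_eq_add]
      exact this
    have := hLeft (h t)
    simp only [Function.comp_apply] at this ⊢
    rw [h1] at this
    exact this.symm
end

section
/- Let X be a real normed vector space and let f₁, f₂ ∈ C¹(X, X) be machines with resolvents R_{f₁} and R_{f₂}. If f₁ does not depend on f₂ and f₂ does not depend on f₁, then f₁ + f₂ is a machine with resolvent R_{f₁+f₂} = R_{f₁} + R_{f₂} − id. -/
universe u

/-- Let `f₁, f₂ ∈ C¹(X, X)` be machines with resolvents `R₁, R₂` (the `C¹`
two-sided inverses of `id − f₁`, `id − f₂`). If `f₁` does not depend on `f₂` and `f₂` does not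
depend on `f₁`, then `f₁ + f₂` is a machine with resolvent `R₁ + R₂ − id`. -/
theorem sum_is_machine_of_mutually_not_depend {X : Type u}
    [NormedAddCommGroup X] [NormedSpace ℝ X]
    (f₁ f₂ : X → X) (hf₁ : ContDiff ℝ 1 f₁) (hf₂ : ContDiff ℝ 1 f₂)
    (hm₁ : IsMachine f₁) (hm₂ : IsMachine f₂)
    (R₁ R₂ : X → X) (hR₁ : ContDiff ℝ 1 R₁) (hR₂ : ContDiff ℝ 1 R₂)
    (hR₁l : Function.LeftInverse R₁ (fun x => x - f₁ x))
    (hR₁r : Function.RightInverse R₁ (fun x => x - f₁ x))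
    (hR₂l : Function.LeftInverse R₂ (fun x => x - f₂ x))
    (hR₂r : Function.RightInverse R₂ (fun x => x - f₂ x))
    (hdep₁₂ : DoesNotDependOn f₁ f₂) (hdep₂₁ : DoesNotDependOn f₂ f₁) :
    IsMachine (fun x => f₁ x + f₂ x) ∧
      ContDiff ℝ 1 (fun x => R₁ x + R₂ x - x) ∧
      Function.LeftInverse (fun x => R₁ x + R₂ x - x) (fun x => x - f₁ x - f₂ x) ∧
      Function.RightInverse (fun x => R₁ x + R₂ x - x) (fun x => x - f₁ x - f₂ x) := by
  have helper : ∀ a b c d : X, a = d + (b + c) → a - b - c = d := by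
    intro a b c d h; rw [h]; abel
  have helper2 : ∀ a b c d : X, a - b - c = d → a = d + (b + c) := by
    intro a b c d h; rw [← h]; abel
  have key1s : ∀ x y : X, f₁ (x - f₂ y) = f₁ x := by
    intro x y
    simpa [sub_eq_add_neg] using hdep₁₂ x y (-1)
  have key1a : ∀ x y : X, f₁ (x + f₂ y) = f₁ x := by
    intro x y; simpa using hdep₁₂ x y 1
  have key2s : ∀ x y : X, f₂ (x - f₁ y) = f₂ x := by
    intro x y
    simpa [sub_eq_add_neg] using hdep₂₁ x y (-1)
  have key2a : ∀ x y : X, f₂ (x + f₁ y) = f₂ x := by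
    intro x y; simpa using hdep₂₁ x y 1
  have hR₁eq : ∀ x, R₁ x = x + f₁ (R₁ x) := by
    intro x
    have h : R₁ x - f₁ (R₁ x) = x := hR₁r x
    rw [sub_eq_iff_eq_add] at h
    exact h
  have hR₂eq : ∀ x, R₂ x = x + f₂ (R₂ x) := by
    intro x
    have h : R₂ x - f₂ (R₂ x) = x := hR₂r x
    rw [sub_eq_iff_eq_add] at h
    exact h
  have Linv : ∀ x : X, R₁ (x - f₁ x - f₂ x) + R₂ (x - f₁ x - f₂ x) - (x - f₁ x - f₂ x) = x := by
    intro x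
    have h1 : R₁ (x - f₁ x - f₂ x) = x - f₂ x := by
      have e : x - f₁ x - f₂ x = (x - f₂ x) - f₁ (x - f₂ x) := by
        rw [key1s x x]; abel
      rw [e]
      exact hR₁l (x - f₂ x)
    have h2 : R₂ (x - f₁ x - f₂ x) = x - f₁ x := by
      have e : x - f₁ x - f₂ x = (x - f₁ x) - f₂ (x - f₁ x) := by
        rw [key2s x x]
      rw [e]
      exact hR₂l (x - f₁ x)
    rw [h1, h2]; abel
  have Rinv : ∀ x : X, (R₁ x + R₂ x - x) - f₁ (R₁ x + R₂ x - x) - f₂ (R₁ x + R₂ x - x) = x := by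
    intro x
    have h1 : f₁ (R₁ x + R₂ x - x) = f₁ (R₁ x) := by
      have e : R₁ x + R₂ x - x = R₁ x + f₂ (R₂ x) := by
        conv_lhs => rw [hR₂eq x]
        abel
      rw [e, key1a]
    have h2 : f₂ (R₁ x + R₂ x - x) = f₂ (R₂ x) := by
      have e : R₁ x + R₂ x - x = R₂ x + f₁ (R₁ x) := by
        conv_lhs => rw [hR₁eq x]
        abel
      rw [e, key2a]
    have e1 : R₁ x - f₁ (R₁ x) = x := hR₁r x
    have e2 : R₂ x - f₂ (R₂ x) = x := hR₂r x
    rw [h1, h2]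
    calc R₁ x + R₂ x - x - f₁ (R₁ x) - f₂ (R₂ x)
        = (R₁ x - f₁ (R₁ x)) + (R₂ x - f₂ (R₂ x)) - x := by abel
      _ = x := by rw [e1, e2]; abel
  have hRc : ContDiff ℝ 1 (fun x => R₁ x + R₂ x - x) := (hR₁.add hR₂).sub contDiff_id
  refine ⟨?_, hRc, Linv, Rinv⟩
  intro X₀ _ _ g hg
  refine ⟨fun t => R₁ (g t) + R₂ (g t) - g t, ⟨?_, ?_⟩, ?_⟩
  · exact ((hR₁.comp hg).add (hR₂.comp hg)).sub hg
  · intro t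
    exact helper2 _ _ _ _ (Rinv (g t))
  · intro h' ⟨_, hh'⟩
    funext t
    have heq : h' t - f₁ (h' t) - f₂ (h' t) = g t := helper _ _ _ _ (hh' t)
    have h2 := Linv (h' t)
    rw [heq] at h2
    exact h2.symm
end

section
/- Let X be a real normed vector space and let f₁, f₂ ∈ C¹(X, X) admit depth cofiltrations of lengths d₁ and d₂ respectively. If f₁ does not depend on f₂, then f₁ + f₂ admits a depth cofiltration of length d₁ + d₂; in particular, the depth of f₁ + f₂ is at most d₁ + d₂. -/
universe u
universe v

open Asymptotics
theorem descend_c1 {X : Type u} {Y : Type v} [NormedAddCommGroup X] [NormedSpace ℝ X]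
    [NormedAddCommGroup Y] [NormedSpace ℝ Y]
    (V : Submodule ℝ X) (hV : IsClosed (V : Set X))
    (g : X → Y) (hg : ContDiff ℝ 1 g)
    (hinv : ∀ x, ∀ v ∈ V, g (x + v) = g x) :
    letI := hV
    ∃ h : (X ⧸ V) → Y, ContDiff ℝ 1 h ∧ ∀ x, h (V.mkQ x) = g x := by
  letI := hV
  obtain ⟨hgd, hgc⟩ := contDiff_one_iff_fderiv.mp hg
  -- the descended function
  have hresp : ∀ a b : X, V.quotientRel a b → g a = g b := by
    intro a b hab
    have h1 : a - b ∈ V := (Submodule.quotientRel_def V).mp hab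
    have := hinv b (a - b) h1
    simpa using this
  set h : (X ⧸ V) → Y := fun q => Quotient.liftOn' q g hresp with hh
  have hmk : ∀ x : X, h (V.mkQ x) = g x := fun x => rfl
  -- the derivative of `g` kills `V`
  have hker : ∀ x₀ : X, ∀ v ∈ V, fderiv ℝ g x₀ v = 0 := by
    intro x₀ v hv
    have hline : HasDerivAt (fun t : ℝ => x₀ + t • v) v 0 := by
      simpa using ((hasDerivAt_id (0 : ℝ)).smul_const v).const_add x₀
    have hgx : HasFDerivAt g (fderiv ℝ g x₀) (x₀ + (0 : ℝ) • v) := by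
      simpa using (hgd x₀).hasFDerivAt
    have hcomp : HasDerivAt (fun t : ℝ => g (x₀ + t • v)) (fderiv ℝ g x₀ v) 0 :=
      hgx.comp_hasDerivAt 0 hline
    have hconst : (fun t : ℝ => g (x₀ + t • v)) = fun _ => g x₀ := by
      funext t
      exact hinv x₀ (t • v) (V.smul_mem t hv)
    rw [hconst] at hcomp
    exact hcomp.unique (hasDerivAt_const 0 (g x₀))
  -- lifting continuous linear maps which kill `V`
  have hbound : ∀ (T : X →L[ℝ] Y) (hT : ∀ v ∈ V, T v = 0) (q : X ⧸ V),
      ‖V.liftQ (T : X →ₗ[ℝ] Y) (fun v hv => hT v hv) q‖ ≤ ‖T‖ * ‖q‖ := by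
    intro T hT q
    refine le_of_forall_pos_le_add fun ε hε => ?_
    have hε' : 0 < ε / (‖T‖ + 1) := by positivity
    obtain ⟨m, hm, hmn⟩ := Submodule.Quotient.norm_mk_lt q hε'
    have hq : V.liftQ (T : X →ₗ[ℝ] Y) (fun v hv => hT v hv) q = T m := by
      rw [← hm]; exact Submodule.liftQ_apply V _ m
    rw [hq]
    calc ‖T m‖ ≤ ‖T‖ * ‖m‖ := T.le_opNorm m
      _ ≤ ‖T‖ * (‖q‖ + ε / (‖T‖ + 1)) := by
          exact mul_le_mul_of_nonneg_left hmn.le (norm_nonneg T)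
      _ ≤ ‖T‖ * ‖q‖ + ε := by
          rw [mul_add]
          have h1 : ‖T‖ * (ε / (‖T‖ + 1)) ≤ ε := by
            rw [mul_div_assoc']
            rw [div_le_iff₀ (by positivity)]
            nlinarith [norm_nonneg T, hε.le]
          linarith
  set L : ∀ (T : X →L[ℝ] Y), (∀ v ∈ V, T v = 0) → ((X ⧸ V) →L[ℝ] Y) :=
    fun T hT => LinearMap.mkContinuous (V.liftQ (T : X →ₗ[ℝ] Y) (fun v hv => hT v hv)) ‖T‖
      (hbound T hT) with hL
  have hLapp : ∀ T hT (x : X), L T hT (V.mkQ x) = T x := by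
    intro T hT x
    simp only [hL, LinearMap.mkContinuous_apply]
    exact Submodule.liftQ_apply V _ x
  have hLnorm : ∀ T hT, ‖L T hT‖ ≤ ‖T‖ :=
    fun T hT => LinearMap.mkContinuous_norm_le _ (norm_nonneg T) _
  have hLsub : ∀ T₁ T₂ h₁ h₂, L T₁ h₁ - L T₂ h₂
      = L (T₁ - T₂) (fun v hv => by simp [h₁ v hv, h₂ v hv]) := by
    intro T₁ T₂ h₁ h₂
    apply ContinuousLinearMap.ext
    intro q
    obtain ⟨x, rfl⟩ := V.mkQ_surjective q
    simp only [ContinuousLinearMap.sub_apply, ← Submodule.mkQ_apply, hLapp]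
  -- differentiability of h
  have hdiff : ∀ x₀ : X, HasFDerivAt h (L (fderiv ℝ g x₀) (hker x₀)) (V.mkQ x₀) := by
    intro x₀
    rw [hasFDerivAt_iff_isLittleO_nhds_zero, isLittleO_iff]
    intro c hc
    have hg' : HasFDerivAt g (fderiv ℝ g x₀) x₀ := (hgd x₀).hasFDerivAt
    have hG := isLittleO_iff.mp (hasFDerivAt_iff_isLittleO_nhds_zero.mp hg') (half_pos hc)
    obtain ⟨δ, hδ, hH⟩ := Metric.eventually_nhds_iff.mp hG
    refine Metric.eventually_nhds_iff.mpr ⟨δ / 2, by positivity, ?_⟩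
    intro w hw
    rw [dist_zero_right] at hw
    by_cases hw0 : w = 0
    · simp [hw0]
    · obtain ⟨u, hu, hun⟩ := Submodule.Quotient.norm_mk_lt w
        (show (0:ℝ) < ‖w‖ from norm_pos_iff.mpr hw0)
    -- identify things
      have huw : V.mkQ u = w := hu
      have h1 : h (V.mkQ x₀ + w) = g (x₀ + u) := by
        rw [← huw, ← map_add]; exact hmk (x₀ + u)
      have h2 : L (fderiv ℝ g x₀) (hker x₀) w = fderiv ℝ g x₀ u := by
        rw [← huw]; exact hLapp _ _ u
      have hun2 : ‖u‖ < 2 * ‖w‖ := by linarith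
      have hud : dist u 0 < δ := by
        rw [dist_zero_right]; linarith
      have := hH hud
      calc ‖h (V.mkQ x₀ + w) - h (V.mkQ x₀) - L (fderiv ℝ g x₀) (hker x₀) w‖
          = ‖g (x₀ + u) - g x₀ - fderiv ℝ g x₀ u‖ := by rw [h1, h2, hmk]
        _ ≤ c / 2 * ‖u‖ := this
        _ ≤ c / 2 * (2 * ‖w‖) := by
            exact mul_le_mul_of_nonneg_left hun2.le (by positivity)
        _ = c * ‖w‖ := by ring
  have hdh : Differentiable ℝ h := by
    intro q
    obtain ⟨x, rfl⟩ := V.mkQ_surjective q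
    exact (hdiff x).differentiableAt
  have hfd : ∀ x : X, fderiv ℝ h (V.mkQ x) = L (fderiv ℝ g x) (hker x) :=
    fun x => (hdiff x).fderiv
  have hch : Continuous (fderiv ℝ h) := by
    rw [continuous_iff_continuousAt]
    intro q₀
    obtain ⟨x₀, rfl⟩ := V.mkQ_surjective q₀
    refine (Metric.continuousAt_iff (f := fderiv ℝ h) (a := V.mkQ x₀)).mpr ?_
    intro ε hε
    obtain ⟨δ, hδ, hδ'⟩ := Metric.continuousAt_iff.mp (hgc.continuousAt (x := x₀)) ε hε
    refine ⟨δ / 2, by positivity, ?_⟩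
    intro q hq
    by_cases h0 : q = V.mkQ x₀
    · simpa [h0] using hε
    · obtain ⟨u, hu, hun⟩ := Submodule.Quotient.norm_mk_lt (q - V.mkQ x₀)
        (show (0:ℝ) < ‖q - V.mkQ x₀‖ from norm_pos_iff.mpr (sub_ne_zero.mpr h0))
      have hq' : V.mkQ (x₀ + u) = q := by
        rw [map_add]
        have : V.mkQ u = q - V.mkQ x₀ := hu
        rw [this]; abel
      have hdu : dist (x₀ + u) x₀ < δ := by
        rw [dist_eq_norm]
        have : ‖q - V.mkQ x₀‖ = dist q (V.mkQ x₀) := (dist_eq_norm _ _).symm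
        simp only [add_sub_cancel_left]
        calc ‖u‖ < ‖q - V.mkQ x₀‖ + ‖q - V.mkQ x₀‖ := hun
          _ = 2 * dist q (V.mkQ x₀) := by rw [← this]; ring
          _ < 2 * (δ / 2) := by linarith
          _ = δ := by ring
      have key := hδ' hdu
      rw [← hq', hfd, hfd]
      refine lt_of_eq_of_lt (dist_eq_norm (E := X ⧸ V →L[ℝ] Y) _ _) ?_
      rw [hLsub]
      calc ‖L (fderiv ℝ g (x₀ + u) - fderiv ℝ g x₀) _‖
          ≤ ‖fderiv ℝ g (x₀ + u) - fderiv ℝ g x₀‖ := hLnorm _ _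
        _ < ε := by rwa [dist_eq_norm] at key
  exact ⟨h, contDiff_one_iff_fderiv.mpr ⟨hdh, hch⟩, hmk⟩

/-- The *depth* of `f : X → X`: the minimal length of a depth cofiltration for `f`
(`∞` if none exists). -/
noncomputable def depth {X : Type u} [NormedAddCommGroup X] [NormedSpace ℝ X]
    (f : X → X) : ℕ∞ :=
  sInf {n : ℕ∞ | ∃ d : ℕ, (d : ℕ∞) = n ∧
    ∃ V : Fin (d + 1) → Submodule ℝ X, IsDepthCofiltration f d V}

/-- If `f₁, f₂ ∈ C¹(X, X)` admit depth cofiltrations of lengths `d₁`, `d₂`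
respectively, and `f₁` does not depend on `f₂` (i.e. `f₁(x₁ + λ f₂(x₂)) = f₁(x₁)` for all
`x₁, x₂, λ`), then `f₁ + f₂` admits a depth cofiltration of length `d₁ + d₂`; in particular
the depth of `f₁ + f₂` is at most `d₁ + d₂`. -/
theorem depth_of_sum_not_depend {X : Type u} [NormedAddCommGroup X] [NormedSpace ℝ X]
    (f₁ f₂ : X → X) (hf₁ : ContDiff ℝ 1 f₁) (hf₂ : ContDiff ℝ 1 f₂)
    (d₁ d₂ : ℕ)
    (hc₁ : ∃ V : Fin (d₁ + 1) → Submodule ℝ X, IsDepthCofiltration f₁ d₁ V)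
    (hc₂ : ∃ V : Fin (d₂ + 1) → Submodule ℝ X, IsDepthCofiltration f₂ d₂ V)
    (hdep : ∀ (x₁ x₂ : X) (lam : ℝ), f₁ (x₁ + lam • f₂ x₂) = f₁ x₁) :
    (∃ V : Fin (d₁ + d₂ + 1) → Submodule ℝ X,
      IsDepthCofiltration (fun x => f₁ x + f₂ x) (d₁ + d₂) V) ∧
    depth (fun x => f₁ x + f₂ x) ≤ (d₁ : ℕ∞) + (d₂ : ℕ∞) := by
  classical
  obtain ⟨V, hVcl, hVanti, hVlast, hV0, hVstep⟩ := hc₁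
  obtain ⟨W, hWcl, hWanti, hWlast, hW0, hWstep⟩ := hc₂
  have hV0' : ∀ x, f₁ x ∈ V 0 := fun x => by
    have := hV0 x; rwa [Submodule.mkQ_apply, Submodule.Quotient.mk_eq_zero] at this
  have hW0' : ∀ x, f₂ x ∈ W 0 := fun x => by
    have := hW0 x; rwa [Submodule.mkQ_apply, Submodule.Quotient.mk_eq_zero] at this
  have hstep₁ : ∀ (i : Fin d₁) (x v : X), v ∈ V i.castSucc → f₁ (x + v) - f₁ x ∈ V i.succ := by
    intro i x v hv
    obtain ⟨ft, -, hfteq⟩ := hVstep i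
    rw [← Submodule.Quotient.eq, ← Submodule.mkQ_apply, ← Submodule.mkQ_apply, hfteq, hfteq]
    congr 1
    rw [Submodule.mkQ_apply, Submodule.mkQ_apply, Submodule.Quotient.eq]
    simpa using hv
  have hstep₂ : ∀ (i : Fin d₂) (x v : X), v ∈ W i.castSucc → f₂ (x + v) - f₂ x ∈ W i.succ := by
    intro i x v hv
    obtain ⟨ft, -, hfteq⟩ := hWstep i
    rw [← Submodule.Quotient.eq, ← Submodule.mkQ_apply, ← Submodule.mkQ_apply, hfteq, hfteq]
    congr 1
    rw [Submodule.mkQ_apply, Submodule.mkQ_apply, Submodule.Quotient.eq]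
    simpa using hv
  set S₀ : Submodule ℝ X := Submodule.span ℝ (Set.range f₂) with hS₀
  set S : Submodule ℝ X := S₀.topologicalClosure with hS
  have hScl : IsClosed (S : Set X) := S₀.isClosed_topologicalClosure
  have hS₀S : S₀ ≤ S := Submodule.le_topologicalClosure S₀
  have hf₂S₀ : ∀ x, f₂ x ∈ S₀ := fun x => Submodule.subset_span ⟨x, rfl⟩
  have hSW0 : S ≤ W 0 := by
    refine Submodule.topologicalClosure_minimal S₀ (Submodule.span_le.mpr ?_) (hWcl 0)
    rintro y ⟨x, rfl⟩
    exact hW0' x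
  have hinv₀ : ∀ s ∈ S₀, ∀ (x : X) (lam : ℝ), f₁ (x + lam • s) = f₁ x := by
    intro s hs
    induction hs using Submodule.span_induction with
    | mem y hy =>
        obtain ⟨z, rfl⟩ := hy
        exact fun x lam => hdep x z lam
    | zero => intro x lam; simp
    | add a b _ _ iha ihb =>
        intro x lam
        rw [smul_add, ← add_assoc, ihb, iha]
    | smul c a _ ih =>
        intro x lam
        rw [smul_smul]
        exact ih x (lam * c)
  have hinvS : ∀ x : X, ∀ s ∈ S, f₁ (x + s) = f₁ x := by
    intro x s hs
    have hcl : IsClosed {v : X | f₁ (x + v) = f₁ x} :=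
      isClosed_eq (hf₁.continuous.comp (continuous_const.add continuous_id)) continuous_const
    have hsub : (S₀ : Set X) ⊆ {v : X | f₁ (x + v) = f₁ x} := fun v hv => by
      simpa using hinv₀ v hv x 1
    have hfin : (S : Set X) ⊆ {v : X | f₁ (x + v) = f₁ x} := by
      rw [hS, Submodule.topologicalClosure_coe]
      exact closure_minimal hsub hcl
    exact hfin hs
  -- the interleaved cofiltration
  set u : ℕ → Submodule ℝ X := fun n =>
    if n ≤ d₁ then (V ⟨min n d₁, by omega⟩ ⊔ S₀).topologicalClosure
    else W ⟨min (n - d₁) d₂, by omega⟩ ⊓ S with hu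
  have hu_lo : ∀ n (h : n ≤ d₁), u n = (V ⟨n, by omega⟩ ⊔ S₀).topologicalClosure := by
    intro n h
    have he : (⟨min n d₁, by omega⟩ : Fin (d₁ + 1)) = ⟨n, by omega⟩ := Fin.ext (by simp [h])
    rw [hu]
    simp only [if_pos h, he]
  have hu_hi : ∀ n (h : d₁ < n), u n = W ⟨min (n - d₁) d₂, by omega⟩ ⊓ S := by
    intro n h
    rw [hu]
    simp only [if_neg (by omega : ¬ n ≤ d₁)]
  have hSu : ∀ n, n ≤ d₁ → S ≤ u n := by
    intro n h
    rw [hu_lo n h, hS]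
    exact Submodule.topologicalClosure_mono le_sup_right
  have hVd₁ : V ⟨d₁, by omega⟩ = ⊥ := by
    have he : (⟨d₁, by omega⟩ : Fin (d₁ + 1)) = Fin.last d₁ := Fin.ext (by simp [Fin.last])
    rw [he, hVlast]
  have hu_hi' : ∀ n, d₁ ≤ n → u n = W ⟨min (n - d₁) d₂, by omega⟩ ⊓ S := by
    intro n h
    rcases eq_or_lt_of_le h with rfl | h'
    · rw [hu_lo d₁ le_rfl]
      have he : (⟨min (d₁ - d₁) d₂, by omega⟩ : Fin (d₂ + 1)) = 0 := Fin.ext (by simp)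
      rw [he, hVd₁, bot_sup_eq, ← hS]
      exact (inf_eq_right.mpr hSW0).symm
    · exact hu_hi n h'
  have hucl : ∀ n, IsClosed ((u n : Set X)) := by
    intro n
    by_cases h : n ≤ d₁
    · rw [hu_lo n h]
      exact Submodule.isClosed_topologicalClosure _
    · rw [hu_hi n (by omega), Submodule.coe_inf]
      exact (hWcl _).inter hScl
  have hu_anti : ∀ n, u (n + 1) ≤ u n := by
    intro n
    by_cases h1 : n + 1 ≤ d₁
    · rw [hu_lo (n + 1) h1, hu_lo n (by omega)]
      refine Submodule.topologicalClosure_mono (sup_le_sup_right ?_ _)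
      exact hVanti (show (⟨n, by omega⟩ : Fin (d₁ + 1)) ≤ ⟨n + 1, by omega⟩ by
        simp [Fin.mk_le_mk])
    · by_cases h2 : n ≤ d₁
      · refine le_trans ?_ (hSu n h2)
        rw [hu_hi' (n + 1) (by omega)]
        exact inf_le_right
      · rw [hu_hi' (n + 1) (by omega), hu_hi' n (by omega)]
        refine inf_le_inf_right S ?_
        exact hWanti (show (⟨min (n - d₁) d₂, by omega⟩ : Fin (d₂ + 1))
            ≤ ⟨min (n + 1 - d₁) d₂, by omega⟩ by simp [Fin.mk_le_mk]; omega)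
  have huAnti : Antitone u := antitone_nat_of_succ_le hu_anti
  have hbotcl : IsClosed ((⊥ : Submodule ℝ X) : Set X) := by
    rw [Submodule.bot_coe]
    exact isClosed_singleton
  have hu_bot : u (d₁ + d₂) = ⊥ := by
    rcases Nat.eq_zero_or_pos d₂ with h2 | h2
    · subst h2
      rw [hu_lo (d₁ + 0) (by omega)]
      have hf₂0 : ∀ x, f₂ x = 0 := by
        intro x
        have h0 : W 0 = ⊥ := by
          have he : (0 : Fin (0 + 1)) = Fin.last 0 := by
            apply Fin.ext; simp
          rw [he, hWlast]
        have hm := hW0' x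
        rw [h0] at hm
        simpa using hm
      have hS₀bot : S₀ = ⊥ := by
        rw [hS₀]
        refine le_bot_iff.mp (Submodule.span_le.mpr ?_)
        rintro y ⟨x, rfl⟩
        simp [hf₂0 x]
      have he : (⟨d₁ + 0, by omega⟩ : Fin (d₁ + 1)) = ⟨d₁, by omega⟩ := Fin.ext (by simp)
      rw [he, hVd₁, hS₀bot, sup_idem]
      exact le_bot_iff.mp (Submodule.topologicalClosure_minimal _ le_rfl hbotcl)
    · rw [hu_hi (d₁ + d₂) (by omega)]
      have he : (⟨min (d₁ + d₂ - d₁) d₂, by omega⟩ : Fin (d₂ + 1)) = Fin.last d₂ :=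
        Fin.ext (by simp [Fin.last])
      rw [he, hWlast, bot_inf_eq]
  have hcof : IsDepthCofiltration (fun x => f₁ x + f₂ x) (d₁ + d₂)
      (fun i : Fin (d₁ + d₂ + 1) => u i.val) := by
    refine ⟨fun i => hucl i.val, ?_, ?_, ?_, ?_⟩
    · exact fun i j hij => huAnti hij
    · show u (Fin.last (d₁ + d₂)).val = ⊥
      simpa using hu_bot
    · intro x
      rw [Submodule.mkQ_apply, Submodule.Quotient.mk_eq_zero]
      show f₁ x + f₂ x ∈ u ((0 : Fin (d₁ + d₂ + 1)).val)
      have h0 : ((0 : Fin (d₁ + d₂ + 1)).val) = 0 := rfl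
      rw [h0, hu_lo 0 (by omega)]
      refine Submodule.le_topologicalClosure _ ?_
      have e0 : (⟨0, by omega⟩ : Fin (d₁ + 1)) = 0 := Fin.ext (by simp)
      refine add_mem (Submodule.mem_sup_left ?_) (Submodule.mem_sup_right (hf₂S₀ x))
      rw [e0]
      exact hV0' x
    · intro i
      letI := hucl i.castSucc.val
      letI := hucl i.succ.val
      have hnlt : i.val < d₁ + d₂ := i.isLt
      have hcv : i.castSucc.val = i.val := rfl
      have hsv : i.succ.val = i.val + 1 := rfl
      have hgC : ContDiff ℝ 1 (fun x => (u i.succ.val).mkQ (f₁ x + f₂ x)) := by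
        have hb : ∀ x : X, ‖(u i.succ.val).mkQ x‖ ≤ 1 * ‖x‖ := fun x => by
          simpa using Submodule.Quotient.norm_mk_le _ x
        exact (((u i.succ.val).mkQ.mkContinuous 1 hb).contDiff).comp (hf₁.add hf₂)
      have hinvg : ∀ x : X, ∀ v ∈ u i.castSucc.val,
          (u i.succ.val).mkQ (f₁ (x + v) + f₂ (x + v)) = (u i.succ.val).mkQ (f₁ x + f₂ x) := by
        intro x v hv
        by_cases hlt : i.val < d₁
        · -- first block
          have hv' : v ∈ closure ((V ⟨i.val, by omega⟩ ⊔ S₀ : Submodule ℝ X) : Set X) := by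
            rw [← Submodule.topologicalClosure_coe]
            rw [hcv, hu_lo i.val (by omega)] at hv
            exact hv
          have hgcont : Continuous (fun y => (u i.succ.val).mkQ (f₁ y + f₂ y)) := hgC.continuous
          have hclosed : IsClosed {w : X |
              (u i.succ.val).mkQ (f₁ (x + w) + f₂ (x + w)) = (u i.succ.val).mkQ (f₁ x + f₂ x)} :=
            isClosed_eq (hgcont.comp (continuous_const.add continuous_id)) continuous_const
          have hsub : ((V ⟨i.val, by omega⟩ ⊔ S₀ : Submodule ℝ X) : Set X) ⊆ {w : X |
              (u i.succ.val).mkQ (f₁ (x + w) + f₂ (x + w)) = (u i.succ.val).mkQ (f₁ x + f₂ x)} := by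
            rintro w hw
            obtain ⟨a, ha, b, hb, rfl⟩ := Submodule.mem_sup.mp hw
            show (u i.succ.val).mkQ (f₁ (x + (a + b)) + f₂ (x + (a + b)))
                = (u i.succ.val).mkQ (f₁ x + f₂ x)
            have e1 : f₁ (x + (a + b)) = f₁ (x + a) := by
              rw [← add_assoc]
              simpa using hinv₀ b hb (x + a) 1
            have ha' : a ∈ V ((⟨i.val, hlt⟩ : Fin d₁).castSucc) := by
              have he : ((⟨i.val, hlt⟩ : Fin d₁).castSucc) = (⟨i.val, by omega⟩ : Fin (d₁ + 1)) :=
                Fin.ext (by simp)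
              rw [he]
              exact ha
            have hfstep := hstep₁ ⟨i.val, hlt⟩ x a ha'
            have hfstep' : f₁ (x + a) - f₁ x ∈ V ⟨i.val + 1, by omega⟩ := by
              have he : ((⟨i.val, hlt⟩ : Fin d₁).succ) = (⟨i.val + 1, by omega⟩ : Fin (d₁ + 1)) :=
                Fin.ext (by simp)
              rw [← he]
              exact hfstep
            rw [Submodule.mkQ_apply, Submodule.mkQ_apply, Submodule.Quotient.eq, e1]
            rw [hsv, hu_lo (i.val + 1) (by omega)]
            refine Submodule.le_topologicalClosure _ ?_
            have heq : f₁ (x + a) + f₂ (x + (a + b)) - (f₁ x + f₂ x)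
                = (f₁ (x + a) - f₁ x) + (f₂ (x + (a + b)) - f₂ x) := by abel
            rw [heq]
            exact add_mem (Submodule.mem_sup_left hfstep')
              (sub_mem (Submodule.mem_sup_right (hf₂S₀ _)) (Submodule.mem_sup_right (hf₂S₀ x)))
          exact closure_minimal hsub hclosed hv'
        · -- second block
          have hge : d₁ ≤ i.val := by omega
          rw [hcv, hu_hi' i.val hge] at hv
          obtain ⟨hvW, hvS⟩ := Submodule.mem_inf.mp hv
          rw [hinvS x v hvS]
          rw [Submodule.mkQ_apply, Submodule.mkQ_apply, Submodule.Quotient.eq]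
          rw [hsv, hu_hi' (i.val + 1) (by omega)]
          have heq : f₁ x + f₂ (x + v) - (f₁ x + f₂ x) = f₂ (x + v) - f₂ x := by abel
          rw [heq]
          have hj : i.val - d₁ < d₂ := by omega
          have hvW' : v ∈ W ((⟨i.val - d₁, hj⟩ : Fin d₂).castSucc) := by
            have he : ((⟨i.val - d₁, hj⟩ : Fin d₂).castSucc)
                = (⟨min (i.val - d₁) d₂, by omega⟩ : Fin (d₂ + 1)) := Fin.ext (by simp; omega)
            rw [he]
            exact hvW
          have hstep := hstep₂ ⟨i.val - d₁, hj⟩ x v hvW'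
          have hstep' : f₂ (x + v) - f₂ x ∈ W ⟨min (i.val + 1 - d₁) d₂, by omega⟩ := by
            have he : ((⟨i.val - d₁, hj⟩ : Fin d₂).succ)
                = (⟨min (i.val + 1 - d₁) d₂, by omega⟩ : Fin (d₂ + 1)) :=
              Fin.ext (by simp; omega)
            rw [← he]
            exact hstep
          exact Submodule.mem_inf.mpr
            ⟨hstep', sub_mem (hS₀S (hf₂S₀ _)) (hS₀S (hf₂S₀ x))⟩
      obtain ⟨ft, hftc, hfteq⟩ := descend_c1 (u i.castSucc.val) (hucl i.castSucc.val)
        (fun x => (u i.succ.val).mkQ (f₁ x + f₂ x)) hgC hinvg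
      exact ⟨ft, hftc, fun x => (hfteq x).symm⟩
  refine ⟨⟨_, hcof⟩, ?_⟩
  have hmem : ((d₁ + d₂ : ℕ) : ℕ∞) ∈ {n : ℕ∞ | ∃ d : ℕ, (d : ℕ∞) = n ∧
      ∃ V : Fin (d + 1) → Submodule ℝ X,
        IsDepthCofiltration (fun x => f₁ x + f₂ x) d V} :=
    ⟨d₁ + d₂, rfl, _, hcof⟩
  have hle : depth (fun x => f₁ x + f₂ x) ≤ ((d₁ + d₂ : ℕ) : ℕ∞) := sInf_le hmem
  calc depth (fun x => f₁ x + f₂ x) ≤ ((d₁ + d₂ : ℕ) : ℕ∞) := hle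
    _ = (d₁ : ℕ∞) + (d₂ : ℕ∞) := by push_cast; rfl
end

section
/- Let X be a real normed vector space and let f₁, f₂ ∈ C¹(X, X) admit depth cofiltrations of lengths d₁ and d₂ respectively. If f₁ does not depend on f₂ and f₂ does not depend on f₁, then f₁ + f₂ admits a depth cofiltration of length max(d₁, d₂); in particular, the depth of f₁ + f₂ is at most max(d₁, d₂). -/
universe u

section Descend

variable {Y : Type*} [NormedAddCommGroup Y] [NormedSpace ℝ Y]
  {Z : Type*} [NormedAddCommGroup Z] [NormedSpace ℝ Z]

theorem liftQ_norm_bound (K : Submodule ℝ Y) (T : Y →L[ℝ] Z)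
    (hT : K ≤ LinearMap.ker (T : Y →ₗ[ℝ] Z)) (q : Y ⧸ K) :
    ‖K.liftQ (T : Y →ₗ[ℝ] Z) hT q‖ ≤ ‖T‖ * ‖q‖ := by
  refine le_of_forall_pos_le_add fun ε hε => ?_
  have hδ : 0 < ε / (‖T‖ + 1) := by positivity
  obtain ⟨m, hm, hmlt⟩ := Submodule.Quotient.norm_mk_lt q hδ
  have he : K.liftQ (T : Y →ₗ[ℝ] Z) hT q = T m := by rw [← hm]; rfl
  rw [he]
  have h1 : ‖T m‖ ≤ ‖T‖ * ‖m‖ := T.le_opNorm m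
  have h2 : ‖T‖ * ‖m‖ ≤ ‖T‖ * (‖q‖ + ε / (‖T‖ + 1)) :=
    mul_le_mul_of_nonneg_left hmlt.le (norm_nonneg T)
  have h3 : ‖T‖ * (ε / (‖T‖ + 1)) ≤ ε := by
    rw [mul_div_assoc'] ; rw [div_le_iff₀ (by positivity)]
    nlinarith [norm_nonneg T, hε.le]
  nlinarith [norm_nonneg T]

def mkQCLM (K : Submodule ℝ Y) : Y →L[ℝ] Y ⧸ K :=
  { toLinearMap := K.mkQ, cont := continuous_quot_mk }

noncomputable def liftQCLM (K : Submodule ℝ Y) (T : Y →L[ℝ] Z)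
    (hT : K ≤ LinearMap.ker (T : Y →ₗ[ℝ] Z)) : (Y ⧸ K) →L[ℝ] Z :=
  (K.liftQ (T : Y →ₗ[ℝ] Z) hT).mkContinuous ‖T‖ (liftQ_norm_bound K T hT)

theorem liftQCLM_mk (K : Submodule ℝ Y) (T : Y →L[ℝ] Z) (hT) (x : Y) :
    liftQCLM K T hT (K.mkQ x) = T x := rfl

theorem liftQCLM_mk' (K : Submodule ℝ Y) (T : Y →L[ℝ] Z) (hT) (x : Y) :
    liftQCLM K T hT (Submodule.Quotient.mk x) = T x := rfl

theorem liftQCLM_norm_le (K : Submodule ℝ Y) (T : Y →L[ℝ] Z) (hT) :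
    ‖liftQCLM K T hT‖ ≤ ‖T‖ :=
  ContinuousLinearMap.opNorm_le_bound _ (norm_nonneg T) (liftQ_norm_bound K T hT)

theorem descend_contDiff (K : Submodule ℝ Y) [hKc : IsClosed (K : Set Y)]
    (h : Y → Z) (hh : ContDiff ℝ 1 h)
    (hinv : ∀ x, ∀ k ∈ K, h (x + k) = h x) :
    ∃ hq : (Y ⧸ K) → Z, ContDiff ℝ 1 hq ∧ ∀ x, hq (K.mkQ x) = h x := by
  obtain ⟨hdiff, hcont⟩ := contDiff_one_iff_fderiv.mp hh
  -- the derivative of h kills K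
  have hker : ∀ x : Y, ∀ k ∈ K, fderiv ℝ h x k = 0 := by
    intro x k hk
    have hc : HasDerivAt (fun t : ℝ => x + t • k) k 0 := by
      simpa using ((hasDerivAt_id (0 : ℝ)).smul_const k).const_add x
    have h1 : HasDerivAt (fun t : ℝ => h (x + t • k)) (fderiv ℝ h x k) 0 := by
      have := (hdiff (x + (0 : ℝ) • k)).hasFDerivAt.comp_hasDerivAt 0 hc
      simpa [Function.comp_def] using this
    have h2 : (fun t : ℝ => h (x + t • k)) = fun _ => h x :=
      funext fun t => hinv x (t • k) (K.smul_mem t hk)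
    rw [h2] at h1
    exact h1.unique (hasDerivAt_const _ _)
  have hker' : ∀ x : Y, K ≤ LinearMap.ker ((fderiv ℝ h x : Y →L[ℝ] Z) : Y →ₗ[ℝ] Z) := by
    intro x k hk
    simpa [LinearMap.mem_ker] using hker x k hk
  set D : Y → (Y ⧸ K) →L[ℝ] Z := fun x => liftQCLM K (fderiv ℝ h x) (hker' x) with hD
  have hfib : ∀ x y : Y, x - y ∈ K → h x = h y := by
    intro x y hxy
    have := hinv y (x - y) hxy
    simpa using this
  set hq : (Y ⧸ K) → Z := fun q => h (K.mkQ_surjective q).choose with hqdef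
  have hq_mk : ∀ x, hq (K.mkQ x) = h x := by
    intro x
    apply hfib
    exact (Submodule.Quotient.eq K).mp (K.mkQ_surjective (K.mkQ x)).choose_spec
  have key : ∀ x : Y, HasFDerivAt hq (D x) (K.mkQ x) := by
    intro x
    rw [hasFDerivAt_iff_isLittleO_nhds_zero, Asymptotics.isLittleO_iff]
    intro c hc
    have hfd := (hdiff x).hasFDerivAt
    rw [hasFDerivAt_iff_isLittleO_nhds_zero, Asymptotics.isLittleO_iff] at hfd
    have hev := hfd (show (0:ℝ) < c / 2 by positivity)
    rw [Metric.eventually_nhds_iff] at hev ⊢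
    obtain ⟨δ, hδ, hball⟩ := hev
    refine ⟨δ / 2, by positivity, ?_⟩
    intro u hu
    rcases eq_or_ne u 0 with rfl | hu0
    · simp
    · have hupos : 0 < ‖u‖ := norm_pos_iff.mpr hu0
      obtain ⟨v, hv, hvlt⟩ := Submodule.Quotient.norm_mk_lt u hupos
      have hv' : K.mkQ v = u := hv
      have hunorm : ‖u‖ < δ / 2 := by simpa [dist_zero_right] using hu
      have hvδ : dist v 0 < δ := by
        rw [dist_zero_right]; linarith
      have hb := hball hvδ
      have e1 : hq (K.mkQ x + u) = h (x + v) := by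
        rw [show K.mkQ x + u = K.mkQ (x + v) by rw [map_add, hv']]
        exact hq_mk _
      have e2 : hq (K.mkQ x) = h x := hq_mk x
      have e3 : D x u = fderiv ℝ h x v := by rw [← hv']; rfl
      rw [e1, e2, e3]
      calc ‖h (x + v) - h x - fderiv ℝ h x v‖ ≤ c / 2 * ‖v‖ := hb
        _ ≤ c / 2 * (2 * ‖u‖) := by nlinarith
        _ = c * ‖u‖ := by ring
  have hdiffq : Differentiable ℝ hq := by
    intro q
    obtain ⟨x, rfl⟩ := K.mkQ_surjective q
    exact (key x).differentiableAt
  have hfderivq : ∀ x, fderiv ℝ hq (K.mkQ x) = D x := fun x => (key x).fderiv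
  -- continuity of the derivative
  have hDdist : ∀ x x' : Y, dist (D x) (D x') ≤ dist (fderiv ℝ h x) (fderiv ℝ h x') := by
    intro x x'
    have h1 : dist (D x) (D x') = ‖D x - D x'‖ := dist_eq_norm (E := (Y ⧸ K) →L[ℝ] Z) _ _
    have h2 : dist (fderiv ℝ h x) (fderiv ℝ h x') = ‖fderiv ℝ h x - fderiv ℝ h x'‖ := dist_eq_norm _ _
    rw [h1, h2]
    have hsub : K ≤ LinearMap.ker
        (((fderiv ℝ h x - fderiv ℝ h x') : Y →L[ℝ] Z) : Y →ₗ[ℝ] Z) := by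
      intro k hk
      have h1 := hker x k hk
      have h2 := hker x' k hk
      simp only [LinearMap.mem_ker]
      simp [ContinuousLinearMap.coe_sub', h1, h2]
    have hdiffF : D x - D x' = liftQCLM K (fderiv ℝ h x - fderiv ℝ h x') hsub := by
      apply ContinuousLinearMap.ext
      intro q
      obtain ⟨y, rfl⟩ := K.mkQ_surjective q
      simp only [hD, ContinuousLinearMap.sub_apply]
      simp [liftQCLM_mk']
    rw [hdiffF]
    exact liftQCLM_norm_le _ _ _
  have hDcont : Continuous D := by
    rw [continuous_iff_continuousAt]
    intro x₀
    have : ContinuousAt D x₀ := by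
      have h1 : @ContinuousAt Y ((Y ⧸ K) →L[ℝ] Z) _
          (ContinuousLinearMap.toPseudoMetricSpace).toUniformSpace.toTopologicalSpace D x₀ := by
        refine Metric.continuousAt_iff.mpr fun ε hε => ?_
        obtain ⟨δ, hδ, hcl⟩ := Metric.continuousAt_iff.mp (hcont.continuousAt (x := x₀)) ε hε
        exact ⟨δ, hδ, fun {x} hx => lt_of_le_of_lt (hDdist x x₀) (hcl hx)⟩
      exact h1
    exact this
  have hcontq : Continuous (fderiv ℝ hq) := by
    rw [← K.isOpenQuotientMap_mkQ.continuous_comp_iff]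
    have : fderiv ℝ hq ∘ K.mkQ = D := funext hfderivq
    rw [this]
    exact hDcont
  exact ⟨hq, contDiff_one_iff_fderiv.mpr ⟨hdiffq, hcontq⟩, hq_mk⟩

end Descend

section Aux

variable {X : Type*} [NormedAddCommGroup X] [NormedSpace ℝ X]

/-- invariance under the closed span of the range of `g` -/
theorem invariant_of_not_depend (f g : X → X) (hf : Continuous f)
    (hdep : ∀ (x₁ x₂ : X) (lam : ℝ), f (x₁ + lam • g x₂) = f x₁) :
    ∀ z ∈ (Submodule.span ℝ (Set.range g)).topologicalClosure, ∀ x, f (x + z) = f x := by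
  have hspan : ∀ z ∈ Submodule.span ℝ (Set.range g), ∀ (x : X) (c : ℝ), f (x + c • z) = f x := by
    intro z hz
    induction hz using Submodule.span_induction with
    | mem w hw =>
      obtain ⟨y, rfl⟩ := hw
      intro x c
      exact hdep x y c
    | zero => intro x c; simp
    | add w₁ w₂ h₁ h₂ ih₁ ih₂ =>
      intro x c
      rw [smul_add, ← add_assoc, ih₂ _ c, ih₁ _ c]
    | smul a w hw ih =>
      intro x c
      rw [smul_smul]
      exact ih x (c * a)
  intro z hz x
  have hcl : z ∈ closure ((Submodule.span ℝ (Set.range g) : Submodule ℝ X) : Set X) := by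
    rwa [← Submodule.topologicalClosure_coe]
  have hT : IsClosed {w : X | f (x + w) = f x} :=
    isClosed_eq (hf.comp (continuous_const.add continuous_id)) continuous_const
  have hsub : ((Submodule.span ℝ (Set.range g) : Submodule ℝ X) : Set X) ⊆
      {w : X | f (x + w) = f x} := by
    intro w hw
    simpa using hspan w hw x 1
  exact closure_minimal hsub hT hcl

/-- promoting a step property along closures -/
theorem step_closure (f : X → X) (hf : Continuous f) (A A' : Submodule ℝ X)
    (hA' : IsClosed (A' : Set X))
    (hstep : ∀ x x', x - x' ∈ A → f x - f x' ∈ A')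
    (Z : Submodule ℝ X) (hinv : ∀ z ∈ Z, ∀ x, f (x + z) = f x) :
    ∀ x w, w ∈ closure ((A ⊔ Z : Submodule ℝ X) : Set X) → f (x + w) - f x ∈ A' := by
  intro x w hw
  have hT : IsClosed {w : X | f (x + w) - f x ∈ A'} := by
    have : Continuous fun w : X => f (x + w) - f x :=
      (hf.comp (continuous_const.add continuous_id)).sub continuous_const
    exact hA'.preimage this
  have hsub : ((A ⊔ Z : Submodule ℝ X) : Set X) ⊆ {w : X | f (x + w) - f x ∈ A'} := by
    intro u hu
    rw [SetLike.mem_coe, Submodule.mem_sup] at hu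
    obtain ⟨a, ha, z, hz, rfl⟩ := hu
    show f (x + (a + z)) - f x ∈ A'
    rw [← add_assoc, hinv z hz (x + a)]
    have := hstep (x + a) x (by simpa using ha)
    exact this
  exact closure_minimal hsub hT hw

end Aux

section Pad

variable {X : Type u} [NormedAddCommGroup X] [NormedSpace ℝ X]

theorem pad_cofiltration (f : X → X) (d : ℕ) (V : Fin (d + 1) → Submodule ℝ X)
    (h : IsDepthCofiltration f d V) :
    ∃ A : ℕ → Submodule ℝ X, (∀ n, IsClosed ((A n : Set X))) ∧
      (∀ n m, n ≤ m → A m ≤ A n) ∧ (∀ n, d ≤ n → A n = ⊥) ∧ (∀ x, f x ∈ A 0) ∧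
      (∀ n x x', x - x' ∈ A n → f x - f x' ∈ A (n + 1)) := by
  obtain ⟨hV, hanti, hlast, h0, hstep⟩ := h
  set A : ℕ → Submodule ℝ X := fun n => V ⟨min n d, by omega⟩ with hA
  have hAeq : ∀ (n : ℕ) (i : Fin (d + 1)), min n d = i.val → A n = V i := by
    intro n i hni
    simp only [hA]
    exact congrArg V (Fin.ext hni)
  refine ⟨A, fun n => by rw [hA]; exact hV _, ?_, ?_, ?_, ?_⟩
  · intro n m hnm
    rw [hA]
    exact hanti (show (⟨min n d, by omega⟩ : Fin (d + 1)) ≤ ⟨min m d, by omega⟩ by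
      rw [Fin.mk_le_mk]; omega)
  · intro n hn
    rw [hAeq n (Fin.last d) (by simp [Fin.last]; omega), hlast]
  · intro x
    rw [hAeq 0 0 (by simp)]
    have := h0 x
    rwa [Submodule.mkQ_apply, Submodule.Quotient.mk_eq_zero] at this
  · intro n x x' hx
    by_cases hn : n < d
    · set i : Fin d := ⟨n, hn⟩ with hi
      obtain ⟨ft, hft, hfteq⟩ := hstep i
      rw [hAeq n i.castSucc (by simp [hi]; omega)] at hx
      rw [hAeq (n + 1) i.succ (by simp [hi]; omega)]
      have hmk : (V i.castSucc).mkQ x = (V i.castSucc).mkQ x' := by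
        rw [Submodule.mkQ_apply, Submodule.mkQ_apply]
        exact (Submodule.Quotient.eq _).mpr hx
      have q1 : (V i.succ).mkQ (f x) = (V i.succ).mkQ (f x') := by
        rw [hfteq x, hfteq x', hmk]
      rw [Submodule.mkQ_apply, Submodule.mkQ_apply] at q1
      exact (Submodule.Quotient.eq _).mp q1
    · rw [hAeq n (Fin.last d) (by simp [Fin.last]; omega), hlast] at hx
      have hxx : x = x' := by
        rw [Submodule.mem_bot, sub_eq_zero] at hx; exact hx
      rw [hxx]
      simp

end Pad

/-- If `f₁, f₂ ∈ C¹(X, X)` admit depth cofiltrations of lengths `d₁`, `d₂`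
respectively, `f₁` does not depend on `f₂`, and `f₂` does not depend on `f₁` (where `f does
not depend on g` means `f(x₁ + λ g(x₂)) = f(x₁)` for all `x₁, x₂, λ`), then `f₁ + f₂` admits
a depth cofiltration of length `max(d₁, d₂)`; in particular the depth of `f₁ + f₂` is at most
`max(d₁, d₂)`. -/
theorem depth_of_sum_mutually_not_depend {X : Type u}
    [NormedAddCommGroup X] [NormedSpace ℝ X]
    (f₁ f₂ : X → X) (hf₁ : ContDiff ℝ 1 f₁) (hf₂ : ContDiff ℝ 1 f₂)
    (d₁ d₂ : ℕ)
    (hc₁ : ∃ V : Fin (d₁ + 1) → Submodule ℝ X, IsDepthCofiltration f₁ d₁ V)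
    (hc₂ : ∃ V : Fin (d₂ + 1) → Submodule ℝ X, IsDepthCofiltration f₂ d₂ V)
    (hdep₁₂ : ∀ (x₁ x₂ : X) (lam : ℝ), f₁ (x₁ + lam • f₂ x₂) = f₁ x₁)
    (hdep₂₁ : ∀ (x₁ x₂ : X) (lam : ℝ), f₂ (x₁ + lam • f₁ x₂) = f₂ x₁) :
    (∃ V : Fin (max d₁ d₂ + 1) → Submodule ℝ X,
      IsDepthCofiltration (fun x => f₁ x + f₂ x) (max d₁ d₂) V) ∧
    depth (fun x => f₁ x + f₂ x) ≤ (max d₁ d₂ : ℕ∞) := by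
  classical
  obtain ⟨V₁, hV₁⟩ := hc₁
  obtain ⟨V₂, hV₂⟩ := hc₂
  obtain ⟨A, hAc, hAanti, hAbot, hA0, hAstep⟩ := pad_cofiltration f₁ d₁ V₁ hV₁
  obtain ⟨B, hBc, hBanti, hBbot, hB0, hBstep⟩ := pad_cofiltration f₂ d₂ V₂ hV₂
  set d := max d₁ d₂ with hd
  set Z₁ : Submodule ℝ X := (Submodule.span ℝ (Set.range f₁)).topologicalClosure with hZ₁
  set Z₂ : Submodule ℝ X := (Submodule.span ℝ (Set.range f₂)).topologicalClosure with hZ₂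
  have hinv₁ : ∀ z ∈ Z₂, ∀ x, f₁ (x + z) = f₁ x :=
    invariant_of_not_depend f₁ f₂ hf₁.continuous hdep₁₂
  have hinv₂ : ∀ z ∈ Z₁, ∀ x, f₂ (x + z) = f₂ x :=
    invariant_of_not_depend f₂ f₁ hf₂.continuous hdep₂₁
  have hZ₁mem : ∀ x, f₁ x ∈ Z₁ := fun x =>
    Submodule.le_topologicalClosure _ (Submodule.subset_span ⟨x, rfl⟩)
  have hZ₂mem : ∀ x, f₂ x ∈ Z₂ := fun x =>
    Submodule.le_topologicalClosure _ (Submodule.subset_span ⟨x, rfl⟩)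
  set W : Fin (d + 1) → Submodule ℝ X := fun i =>
    if (i : ℕ) = d then ⊥
    else ((A (i : ℕ) ⊔ Z₂).topologicalClosure ⊓ (B (i : ℕ) ⊔ Z₁).topologicalClosure) with hW
  have hWbot : ∀ i : Fin (d + 1), (i : ℕ) = d → W i = ⊥ := by
    intro i hi; simp only [hW]; rw [if_pos hi]
  have hWne : ∀ i : Fin (d + 1), (i : ℕ) ≠ d →
      W i = ((A (i : ℕ) ⊔ Z₂).topologicalClosure ⊓ (B (i : ℕ) ⊔ Z₁).topologicalClosure) := by
    intro i hi; simp only [hW]; rw [if_neg hi]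
  have hWc : ∀ i, IsClosed ((W i : Set X)) := by
    intro i
    by_cases hi : (i : ℕ) = d
    · rw [hWbot i hi, Submodule.bot_coe]
      exact isClosed_singleton
    · rw [hWne i hi]
      rw [Submodule.coe_inf]
      exact (Submodule.isClosed_topologicalClosure _).inter
        (Submodule.isClosed_topologicalClosure _)
  -- the key step estimate
  have hstep' : ∀ i : Fin d, ∀ x k : X, k ∈ W i.castSucc →
      (f₁ (x + k) + f₂ (x + k)) - (f₁ x + f₂ x) ∈ W i.succ := by
    intro i x k hk
    have hics : ((i.castSucc : Fin (d + 1)) : ℕ) = (i : ℕ) := rfl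
    have hicsne : ((i.castSucc : Fin (d + 1)) : ℕ) ≠ d := by
      rw [hics]; omega
    rw [hWne _ hicsne] at hk
    obtain ⟨hk1, hk2⟩ := Submodule.mem_inf.mp hk
    have hk1' : k ∈ closure ((A (i : ℕ) ⊔ Z₂ : Submodule ℝ X) : Set X) := by
      rw [← Submodule.topologicalClosure_coe]
      exact hk1
    have hk2' : k ∈ closure ((B (i : ℕ) ⊔ Z₁ : Submodule ℝ X) : Set X) := by
      rw [← Submodule.topologicalClosure_coe]
      exact hk2
    have m1 : f₁ (x + k) - f₁ x ∈ A ((i : ℕ) + 1) :=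
      step_closure f₁ hf₁.continuous (A (i : ℕ)) (A ((i : ℕ) + 1)) (hAc _)
        (fun a b hab => hAstep (i : ℕ) a b hab) Z₂ hinv₁ x k hk1'
    have m2 : f₂ (x + k) - f₂ x ∈ B ((i : ℕ) + 1) :=
      step_closure f₂ hf₂.continuous (B (i : ℕ)) (B ((i : ℕ) + 1)) (hBc _)
        (fun a b hab => hBstep (i : ℕ) a b hab) Z₁ hinv₂ x k hk2'
    have mz1 : f₁ (x + k) - f₁ x ∈ Z₁ := sub_mem (hZ₁mem _) (hZ₁mem _)
    have mz2 : f₂ (x + k) - f₂ x ∈ Z₂ := sub_mem (hZ₂mem _) (hZ₂mem _)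
    have hsum : (f₁ (x + k) + f₂ (x + k)) - (f₁ x + f₂ x)
        = (f₁ (x + k) - f₁ x) + (f₂ (x + k) - f₂ x) := by abel
    rw [hsum]
    have hisv : ((i.succ : Fin (d + 1)) : ℕ) = (i : ℕ) + 1 := rfl
    by_cases hs : ((i.succ : Fin (d + 1)) : ℕ) = d
    · rw [hWbot _ hs]
      have e1 : A ((i : ℕ) + 1) = ⊥ := hAbot _ (by omega)
      have e2 : B ((i : ℕ) + 1) = ⊥ := hBbot _ (by omega)
      rw [e1, Submodule.mem_bot] at m1
      rw [e2, Submodule.mem_bot] at m2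
      rw [m1, m2]
      simp
    · rw [hWne _ hs]
      refine Submodule.mem_inf.mpr ⟨?_, ?_⟩
      · refine add_mem ?_ ?_
        · exact Submodule.le_topologicalClosure _ (Submodule.mem_sup_left (by rw [hisv]; exact m1))
        · exact Submodule.le_topologicalClosure _ (Submodule.mem_sup_right mz2)
      · refine add_mem ?_ ?_
        · exact Submodule.le_topologicalClosure _ (Submodule.mem_sup_right mz1)
        · exact Submodule.le_topologicalClosure _ (Submodule.mem_sup_left (by rw [hisv]; exact m2))
  have hmain : IsDepthCofiltration (fun x => f₁ x + f₂ x) d W := by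
    refine ⟨hWc, ?_, ?_, ?_, ?_⟩
    · -- Antitone
      intro i j hij
      by_cases hj : (j : ℕ) = d
      · rw [hWbot j hj]; exact bot_le
      · have hj' : (j : ℕ) < d := lt_of_le_of_ne (Nat.lt_succ_iff.mp j.isLt) hj
        have hij' : (i : ℕ) ≤ (j : ℕ) := hij
        have hi : (i : ℕ) ≠ d := by omega
        rw [hWne i hi, hWne j hj]
        exact inf_le_inf
          (Submodule.topologicalClosure_mono (sup_le_sup_right (hAanti _ _ hij') _))
          (Submodule.topologicalClosure_mono (sup_le_sup_right (hBanti _ _ hij') _))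
    · exact hWbot (Fin.last d) (by simp)
    · intro x
      rw [Submodule.mkQ_apply, Submodule.Quotient.mk_eq_zero]
      show f₁ x + f₂ x ∈ W 0
      by_cases hd0 : d = 0
      · rw [hWbot 0 (by simp [hd0])]
        have e1 : f₁ x ∈ A 0 := hA0 x
        have e2 : f₂ x ∈ B 0 := hB0 x
        rw [hAbot 0 (by omega), Submodule.mem_bot] at e1
        rw [hBbot 0 (by omega), Submodule.mem_bot] at e2
        rw [e1, e2]
        simp
      · rw [hWne 0 (by simp; omega)]
        have h0v : (((0 : Fin (d + 1)) : ℕ)) = 0 := rfl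
        refine Submodule.mem_inf.mpr ⟨?_, ?_⟩
        · refine add_mem ?_ ?_
          · exact Submodule.le_topologicalClosure _
              (Submodule.mem_sup_left (by rw [h0v]; exact hA0 x))
          · exact Submodule.le_topologicalClosure _ (Submodule.mem_sup_right (hZ₂mem x))
        · refine add_mem ?_ ?_
          · exact Submodule.le_topologicalClosure _ (Submodule.mem_sup_right (hZ₁mem x))
          · exact Submodule.le_topologicalClosure _
              (Submodule.mem_sup_left (by rw [h0v]; exact hB0 x))
    · intro i
      haveI := hWc i.castSucc
      haveI := hWc i.succ
      have hconth : ContDiff ℝ 1 (fun x => (W i.succ).mkQ (f₁ x + f₂ x)) := by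
        have hg : ContDiff ℝ 1 (fun x => f₁ x + f₂ x) := hf₁.add hf₂
        exact (mkQCLM (W i.succ)).contDiff.comp hg
      have hinvW : ∀ x : X, ∀ k ∈ W i.castSucc,
          (fun x => (W i.succ).mkQ (f₁ x + f₂ x)) (x + k)
            = (fun x => (W i.succ).mkQ (f₁ x + f₂ x)) x := by
        intro x k hk
        show (W i.succ).mkQ (f₁ (x + k) + f₂ (x + k)) = (W i.succ).mkQ (f₁ x + f₂ x)
        rw [Submodule.mkQ_apply, Submodule.mkQ_apply]
        exact (Submodule.Quotient.eq _).mpr (hstep' i x k hk)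
      obtain ⟨ft, hft, hfteq⟩ := descend_contDiff (W i.castSucc)
        (fun x => (W i.succ).mkQ (f₁ x + f₂ x)) hconth hinvW
      exact ⟨ft, hft, fun x => (hfteq x).symm⟩
  refine ⟨⟨W, hmain⟩, ?_⟩
  unfold depth
  exact sInf_le ⟨d, rfl, W, hmain⟩
end

section
/- Let X be a real normed vector space, f ∈ C¹(X, X), and let X ⊇ V₀ ⊇ V₁ ⊇ … ⊇ V_d = 0 be a depth cofiltration of length d for f. Let S denote the topological closure of the linear span of the image of f. Then the sequence Ṽ_i = V_i ∩ S (for i = 0, …, d) is again a depth cofiltration of length d for f, and Ṽ₀ = S. -/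
open scoped Topology

section Aux
variable {X Y : Type*} [NormedAddCommGroup X] [NormedSpace ℝ X]
  [NormedAddCommGroup Y] [NormedSpace ℝ Y]

/-- `mkQ` as a continuous linear map. -/
noncomputable def mkQc (W : Submodule ℝ X) : X →L[ℝ] X ⧸ W :=
  LinearMap.mkContinuous W.mkQ 1 fun x => by
    simpa using Submodule.Quotient.norm_mk_le W x

/-- Lift of a continuous linear map vanishing on `W` to the quotient. -/
noncomputable def liftQc (W : Submodule ℝ X) (D : X →L[ℝ] Y)
    (h : ∀ w ∈ W, D w = 0) : (X ⧸ W) →L[ℝ] Y :=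
  LinearMap.mkContinuous
    (W.liftQ D.toLinearMap fun w hw => LinearMap.mem_ker.2 (h w hw)) ‖D‖ fun x => by
    refine le_of_forall_pos_le_add fun ε hε => ?_
    have hpos : (0:ℝ) < ‖D‖ + 1 := by positivity
    obtain ⟨m, hm, hm'⟩ := Submodule.Quotient.norm_mk_lt x (div_pos hε hpos)
    subst hm
    have h1 : ‖(W.liftQ D.toLinearMap fun w hw => LinearMap.mem_ker.2 (h w hw))
        (Submodule.Quotient.mk m)‖ = ‖D m‖ := rfl
    rw [h1]
    have h2 : ‖D m‖ ≤ ‖D‖ * ‖m‖ := D.le_opNorm m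
    have h3 : ‖D‖ * ‖m‖ ≤ ‖D‖ * (‖(Submodule.Quotient.mk m : X ⧸ W)‖ + ε / (‖D‖ + 1)) :=
      mul_le_mul_of_nonneg_left hm'.le (norm_nonneg D)
    have h4 : ‖D‖ * (ε / (‖D‖ + 1)) ≤ ε := by
      rw [mul_div_assoc']
      rw [div_le_iff₀ hpos]
      nlinarith [norm_nonneg D, hε.le]
    nlinarith [norm_nonneg D]

@[simp] theorem liftQc_mk (W : Submodule ℝ X) (D : X →L[ℝ] Y)
    (h : ∀ w ∈ W, D w = 0) (x : X) : liftQc W D h (W.mkQ x) = D x := rfl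

theorem liftQc_sub_norm_le (W : Submodule ℝ X) (D D' : X →L[ℝ] Y)
    (h : ∀ w ∈ W, D w = 0) (h' : ∀ w ∈ W, D' w = 0) :
    ‖liftQc W D h - liftQc W D' h'‖ ≤ ‖D - D'‖ := by
  have key : liftQc W D h - liftQc W D' h' =
      liftQc W (D - D') (fun w hw => by simp [h w hw, h' w hw]) := by
    refine ContinuousLinearMap.ext fun z => ?_
    obtain ⟨y, rfl⟩ := W.mkQ_surjective z
    rfl
  rw [key]
  exact LinearMap.mkContinuous_norm_le _ (norm_nonneg _) _


theorem exists_contDiff_quotient_factor (W : Submodule ℝ X) (hW : IsClosed (W : Set X))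
    (g : X → Y) (hg : ContDiff ℝ 1 g)
    (hconst : ∀ x : X, ∀ w ∈ W, g (x + w) = g x) :
    ∃ u : (X ⧸ W) → Y, ContDiff ℝ 1 u ∧ ∀ x, g x = u (W.mkQ x) := by
  haveI : IsClosed (W : Set X) := hW
  obtain ⟨hdiff, hcont⟩ := contDiff_one_iff_fderiv.mp hg
  -- the derivative vanishes on `W`
  have hker : ∀ x : X, ∀ w ∈ W, fderiv ℝ g x w = 0 := by
    intro x w hw
    have hline : HasDerivAt (fun t : ℝ => x + t • w) w 0 := by
      simpa using ((hasDerivAt_id (0:ℝ)).smul_const w).const_add x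
    have hcomp : HasDerivAt (fun t : ℝ => g (x + t • w)) (fderiv ℝ g x w) 0 := by
      have hg' : HasFDerivAt g (fderiv ℝ g x) (x + (0:ℝ) • w) := by
        simpa using (hdiff x).hasFDerivAt
      exact hg'.comp_hasDerivAt 0 hline
    have hconst' : (fun t : ℝ => g (x + t • w)) = fun _ => g x :=
      funext fun t => hconst x (t • w) (W.smul_mem t hw)
    have hzero : HasDerivAt (fun t : ℝ => g (x + t • w)) 0 0 := by
      rw [hconst']; exact hasDerivAt_const 0 (g x)
    exact hcomp.unique hzero
  -- the factored map
  have hlift : ∀ a b : X, W.quotientRel a b → g a = g b := by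
    intro a b hab
    rw [Submodule.quotientRel_def] at hab
    have : g (b + (a - b)) = g b := hconst b (a - b) hab
    simpa using this
  refine ⟨fun z => Quotient.liftOn' z g hlift, ?_, fun x => rfl⟩
  set u : (X ⧸ W) → Y := fun z => Quotient.liftOn' z g hlift with hu
  have humk : ∀ x : X, u (W.mkQ x) = g x := fun x => rfl
  -- differentiability of `u`
  have hasU : ∀ x : X, HasFDerivAt u (liftQc W (fderiv ℝ g x) (hker x)) (W.mkQ x) := by
    intro x
    rw [hasFDerivAt_iff_isLittleO, Asymptotics.isLittleO_iff]
    intro c hc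
    have hc2 : (0:ℝ) < c / 2 := by linarith
    have hx := (hdiff x).hasFDerivAt.isLittleO
    rw [Asymptotics.isLittleO_iff] at hx
    obtain ⟨δ, hδ, hb⟩ := Metric.eventually_nhds_iff.1 (hx hc2)
    rw [Metric.eventually_nhds_iff]
    refine ⟨δ / 2, by linarith, fun z hz => ?_⟩
    rcases eq_or_ne z (W.mkQ x) with rfl | hne
    · simp
    · have hr : (0:ℝ) < ‖z - W.mkQ x‖ := by
        rw [norm_pos_iff]
        exact sub_ne_zero_of_ne hne
      set r := ‖z - W.mkQ x‖ with hrdef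
      have hrδ : r < δ / 2 := by
        rw [hrdef, ← dist_eq_norm]; exact hz
      obtain ⟨m, hm, hm'⟩ := Submodule.Quotient.norm_mk_lt (z - W.mkQ x)
        (lt_min hr (by linarith : (0:ℝ) < δ / 2))
      have hmle : ‖m‖ < 2 * r := by
        have := min_le_left r (δ / 2)
        calc ‖m‖ < r + min r (δ/2) := hm'
        _ ≤ r + r := by linarith [min_le_left r (δ/2)]
        _ = 2 * r := by ring
      have hmδ : ‖m‖ < δ := by
        calc ‖m‖ < r + min r (δ/2) := hm'
        _ ≤ r + δ/2 := by linarith [min_le_right r (δ/2)]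
        _ < δ := by linarith
      have hzeq : z = W.mkQ (x + m) := by
        have : (W.mkQ) (x + m) = W.mkQ x + Submodule.Quotient.mk m := by
          simp [map_add]
        rw [this, hm]; abel
      have key := hb (show dist (x + m) x < δ by simpa [dist_eq_norm] using hmδ)
      have hexp : u z - u (W.mkQ x) - (liftQc W (fderiv ℝ g x) (hker x)) (z - W.mkQ x)
          = g (x + m) - g x - fderiv ℝ g x m := by
        rw [hzeq]
        have h2 : W.mkQ (x + m) - W.mkQ x = W.mkQ m := by
          rw [← map_sub]; congr 1; abel
        rw [humk, humk, h2, liftQc_mk]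
      rw [hexp]
      have : ‖g (x + m) - g x - fderiv ℝ g x m‖ ≤ c / 2 * ‖m‖ := by
        simpa using key
      calc ‖g (x + m) - g x - fderiv ℝ g x m‖ ≤ c / 2 * ‖m‖ := this
      _ ≤ c / 2 * (2 * r) := by nlinarith
      _ = c * r := by ring
  have hdiffu : Differentiable ℝ u := by
    intro z
    obtain ⟨x, rfl⟩ := W.mkQ_surjective z
    exact (hasU x).differentiableAt
  rw [contDiff_one_iff_fderiv]
  refine ⟨hdiffu, ?_⟩
  have hquot : Topology.IsQuotientMap (W.mkQ : X → X ⧸ W) :=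
    QuotientAddGroup.isQuotientMap_mk W.toAddSubgroup
  rw [hquot.continuous_iff]
  have heq : (fun z => fderiv ℝ u z) ∘ (W.mkQ : X → X ⧸ W)
      = fun x => liftQc W (fderiv ℝ g x) (hker x) :=
    funext fun x => (hasU x).fderiv
  rw [heq]
  refine Metric.continuous_iff.2 fun x ε hε => ?_
  obtain ⟨δ, hδ, hd⟩ := Metric.continuous_iff.1 hcont x ε hε
  refine ⟨δ, hδ, fun a ha => lt_of_le_of_lt ?_ (hd a ha)⟩
  rw [dist_eq_norm, dist_eq_norm]
  exact liftQc_sub_norm_le W _ _ _ _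

end Aux

universe u

/-- Let `X ⊇ V₀ ⊇ … ⊇ V_d = 0` be a depth cofiltration of length `d` for
`f ∈ C¹(X, X)` and let `S` be the topological closure of the linear span of the image of `f`.
Then `Ṽ_i = V_i ∩ S` is again a depth cofiltration of length `d` for `f`, and `Ṽ₀ = S`. -/
theorem depthCofiltration_inter_span_image {X : Type u}
    [NormedAddCommGroup X] [NormedSpace ℝ X]
    (f : X → X) (hf : ContDiff ℝ 1 f)
    (d : ℕ) (V : Fin (d + 1) → Submodule ℝ X)
    (hcof : IsDepthCofiltration f d V) :
    IsDepthCofiltration f d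
        (fun i => V i ⊓ (Submodule.span ℝ (Set.range f)).topologicalClosure) ∧
      V 0 ⊓ (Submodule.span ℝ (Set.range f)).topologicalClosure =
        (Submodule.span ℝ (Set.range f)).topologicalClosure := by
  obtain ⟨hV, hmono, hlast, h0, hstep⟩ := hcof
  set S := (Submodule.span ℝ (Set.range f)).topologicalClosure with hSdef
  have hfS : ∀ x, f x ∈ S := fun x =>
    (Submodule.le_topologicalClosure _) (Submodule.subset_span ⟨x, rfl⟩)
  have hfV0 : ∀ x, f x ∈ V 0 := fun x => by
    have h := h0 x
    rwa [Submodule.mkQ_apply, Submodule.Quotient.mk_eq_zero] at h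
  have hSclosed : IsClosed (S : Set X) :=
    (Submodule.span ℝ (Set.range f)).isClosed_topologicalClosure
  have hV' : ∀ i, IsClosed (((V i ⊓ S : Submodule ℝ X) : Set X)) := fun i => by
    have : ((V i ⊓ S : Submodule ℝ X) : Set X) = (V i : Set X) ∩ (S : Set X) := rfl
    rw [this]
    exact (hV i).inter hSclosed
  constructor
  · refine ⟨hV', fun i j hij => inf_le_inf_right _ (hmono hij), ?_, ?_, ?_⟩
    · simp only [hlast, bot_inf_eq]
    · intro x
      rw [Submodule.mkQ_apply, Submodule.Quotient.mk_eq_zero]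
      exact Submodule.mem_inf.2 ⟨hfV0 x, hfS x⟩
    · intro i
      letI := hV' i.castSucc
      letI := hV' i.succ
      letI := hV i.castSucc
      letI := hV i.succ
      obtain ⟨ft, hft, hcomm⟩ := hstep i
      have hg : ContDiff ℝ 1 (fun x => (V i.succ ⊓ S).mkQ (f x)) :=
        (mkQc (V i.succ ⊓ S)).contDiff.comp hf
      have hconst : ∀ x : X, ∀ w ∈ (V i.castSucc ⊓ S),
          (V i.succ ⊓ S).mkQ (f (x + w)) = (V i.succ ⊓ S).mkQ (f x) := by
        intro x w hw
        obtain ⟨hw1, hw2⟩ := Submodule.mem_inf.1 hw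
        rw [Submodule.mkQ_apply, Submodule.mkQ_apply, Submodule.Quotient.eq]
        refine Submodule.mem_inf.2 ⟨?_, sub_mem (hfS _) (hfS _)⟩
        have hmk : (V i.castSucc).mkQ (x + w) = (V i.castSucc).mkQ x := by
          rw [Submodule.mkQ_apply, Submodule.mkQ_apply, Submodule.Quotient.eq]
          simpa using hw1
        have h1 := hcomm (x + w)
        have h2 := hcomm x
        rw [hmk] at h1
        have h3 : (V i.succ).mkQ (f (x + w)) = (V i.succ).mkQ (f x) := by
          rw [h1, h2]
        rw [Submodule.mkQ_apply, Submodule.mkQ_apply, Submodule.Quotient.eq] at h3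
        exact h3
      obtain ⟨u, hu, hueq⟩ := exists_contDiff_quotient_factor (V i.castSucc ⊓ S)
        (hV' i.castSucc) (fun x => (V i.succ ⊓ S).mkQ (f x)) hg hconst
      exact ⟨u, hu, hueq⟩
  · rw [inf_eq_right]
    refine Submodule.topologicalClosure_minimal _ ?_ (hV 0)
    rw [Submodule.span_le]
    rintro y ⟨x, rfl⟩
    exact hfV0 x
end

section
/- Let P and X be real normed vector spaces, let f ∈ C¹(P × X, X), and suppose R ∈ C¹(P × X, X) satisfies R(p, x₀) = x₀ + f(p, R(p, x₀)) for all (p, x₀) ∈ P × X, and that for each p the map x₀ ↦ R(p, x₀) is a two-sided inverse of id − f(p, ·). Then for every (p, x₀), writing x = R(p, x₀): (i) the partial Fréchet derivative ∂R/∂x₀(p, x₀) ∈ B(X, X) is the two-sided inverse of id − ∂f/∂x(p, x) in B(X, X); and (ii) ∂R/∂p(p, x₀) = ∂R/∂x₀(p, x₀) ∘ ∂f/∂p(p, x) in B(P, X). -/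
universe u v

/-- Let `f ∈ C¹(P × X, X)` and suppose `R ∈ C¹(P × X, X)` satisfies the
parametric machine equation `R(p, x₀) = x₀ + f(p, R(p, x₀))`, with `R(p, ·)` a two-sided
inverse of `id − f(p, ·)` for each `p`. Then, writing `x = R(p, x₀)`:
(i) `∂R/∂x₀(p, x₀)` is the two-sided inverse of `id − ∂f/∂x(p, x)` in `B(X, X)`;
(ii) `∂R/∂p(p, x₀) = ∂R/∂x₀(p, x₀) ∘ ∂f/∂p(p, x)` in `B(P, X)`. -/
theorem parametric_resolvent_derivatives {P : Type u} {X : Type v}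
    [NormedAddCommGroup P] [NormedSpace ℝ P]
    [NormedAddCommGroup X] [NormedSpace ℝ X]
    (f : P × X → X) (hf : ContDiff ℝ 1 f)
    (R : P × X → X) (hR : ContDiff ℝ 1 R)
    (hfix : ∀ (p : P) (x₀ : X), R (p, x₀) = x₀ + f (p, R (p, x₀)))
    (hinvl : ∀ p : P,
      Function.LeftInverse (fun x₀ => R (p, x₀)) (fun x => x - f (p, x)))
    (hinvr : ∀ p : P,
      Function.RightInverse (fun x₀ => R (p, x₀)) (fun x => x - f (p, x)))
    (p : P) (x₀ : X) :
    ((ContinuousLinearMap.id ℝ X -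
          fderiv ℝ (fun y => f (p, y)) (R (p, x₀))).comp
        (fderiv ℝ (fun y => R (p, y)) x₀) = ContinuousLinearMap.id ℝ X ∧
      (fderiv ℝ (fun y => R (p, y)) x₀).comp
        (ContinuousLinearMap.id ℝ X -
          fderiv ℝ (fun y => f (p, y)) (R (p, x₀))) = ContinuousLinearMap.id ℝ X) ∧
    fderiv ℝ (fun q => R (q, x₀)) p =
      (fderiv ℝ (fun y => R (p, y)) x₀).comp
        (fderiv ℝ (fun q => f (q, R (p, x₀))) p) := by
  set x := R (p, x₀) with hx
  set F : P × X →L[ℝ] X := fderiv ℝ f (p, x) with hFdef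
  set G : P × X →L[ℝ] X := fderiv ℝ R (p, x₀) with hGdef
  have hF : HasFDerivAt f F (p, x) :=
    (hf.differentiable one_ne_zero (p, x)).hasFDerivAt
  have hG : HasFDerivAt R G (p, x₀) :=
    (hR.differentiable one_ne_zero (p, x₀)).hasFDerivAt
  set A : X →L[ℝ] X := F.comp (ContinuousLinearMap.inr ℝ P X) with hAdef
  set B : X →L[ℝ] X := G.comp (ContinuousLinearMap.inr ℝ P X) with hBdef
  have hA : HasFDerivAt (fun y => f (p, y)) A x :=
    hF.comp x (hasFDerivAt_prodMk_right p x)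
  have hB : HasFDerivAt (fun y => R (p, y)) B x₀ :=
    hG.comp x₀ (hasFDerivAt_prodMk_right p x₀)
  have hgx : x - f (p, x) = x₀ := by
    rw [hx]; exact hinvr p x₀
  set I : X →L[ℝ] X := ContinuousLinearMap.id ℝ X with hIdef
  -- (i) first identity
  have h1 : HasFDerivAt (fun y => R (p, y) - f (p, R (p, y))) (B - A.comp B) x₀ :=
    hB.sub (by
      have hA0 : HasFDerivAt (fun y => f (p, y)) A (R (p, x₀)) := hA
      exact hA0.comp x₀ hB)
  have h1' : HasFDerivAt (fun y : X => y) (B - A.comp B) x₀ := by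
    have : (fun y => R (p, y) - f (p, R (p, y))) = fun y : X => y :=
      funext fun y => hinvr p y
    rwa [this] at h1
  have hi1 : (I - A).comp B = I := by
    have hu : B - A.comp B = I := h1'.unique (hasFDerivAt_id x₀)
    have h : (I - A).comp B = B - A.comp B := by
      ext z; simp [hIdef]
    rw [h]; exact hu
  -- (i) second identity
  have hg : HasFDerivAt (fun y : X => y - f (p, y)) (I - A) x :=
    (hasFDerivAt_id x).sub hA
  have hB' : HasFDerivAt (fun y => R (p, y)) B (x - f (p, x)) := by
    rwa [hgx]
  have h2 : HasFDerivAt (fun y : X => R (p, y - f (p, y))) (B.comp (I - A)) x :=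
    by
      have hB0 : HasFDerivAt (fun y => R (p, y)) B ((fun y : X => y - f (p, y)) x) := hB'
      exact hB0.comp x hg
  have h2' : HasFDerivAt (fun y : X => y) (B.comp (I - A)) x := by
    have : (fun y : X => R (p, y - f (p, y))) = fun y : X => y :=
      funext fun y => hinvl p y
    rwa [this] at h2
  have hi2 : B.comp (I - A) = I := h2'.unique (hasFDerivAt_id x)
  -- (ii)
  set Gl : P →L[ℝ] X := G.comp (ContinuousLinearMap.inl ℝ P X) with hGldef
  have hGl : HasFDerivAt (fun q => R (q, x₀)) Gl p :=
    hG.comp p (hasFDerivAt_prodMk_left p x₀)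
  have hpair : HasFDerivAt (fun q : P => (q, R (q, x₀)))
      ((ContinuousLinearMap.id ℝ P).prod Gl) p :=
    (hasFDerivAt_id p).prodMk hGl
  have hFl : HasFDerivAt (fun q => f (q, x)) (F.comp (ContinuousLinearMap.inl ℝ P X)) p :=
    hF.comp p (hasFDerivAt_prodMk_left p x)
  have hRHS : HasFDerivAt (fun q => x₀ + f (q, R (q, x₀)))
      (F.comp ((ContinuousLinearMap.id ℝ P).prod Gl)) p :=
    (hF.comp p hpair).const_add x₀
  have hRHS' : HasFDerivAt (fun q => R (q, x₀))
      (F.comp ((ContinuousLinearMap.id ℝ P).prod Gl)) p := by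
    have : (fun q => x₀ + f (q, R (q, x₀))) = fun q => R (q, x₀) :=
      funext fun q => (hfix q x₀).symm
    rwa [this] at hRHS
  have heq : Gl = F.comp (ContinuousLinearMap.inl ℝ P X) + A.comp Gl := by
    have hu : Gl = F.comp ((ContinuousLinearMap.id ℝ P).prod Gl) := hGl.unique hRHS'
    ext z
    have hz : Gl z = F (z, Gl z) := ContinuousLinearMap.ext_iff.mp hu z
    show Gl z = F (z, 0) + F (0, Gl z)
    calc Gl z = F (z, Gl z) := hz
      _ = F ((z, 0) + ((0 : P), Gl z)) := by simp
      _ = F (z, 0) + F (0, Gl z) := map_add _ _ _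
  have key : (I - A).comp Gl = F.comp (ContinuousLinearMap.inl ℝ P X) := by
    have h : (I - A).comp Gl = Gl - A.comp Gl := by
      ext z; simp [hIdef]
    rw [h]; exact sub_eq_of_eq_add heq
  refine ⟨⟨?_, ?_⟩, ?_⟩
  · rw [hA.fderiv, hB.fderiv]; exact hi1
  · rw [hA.fderiv, hB.fderiv]; exact hi2
  · rw [hGl.fderiv, hB.fderiv, hFl.fderiv, ← key, ← ContinuousLinearMap.comp_assoc, hi2,
      ContinuousLinearMap.id_comp]
end

section
/- Let P and X be real normed vector spaces, let f ∈ C¹(P × X, X), and suppose R ∈ C¹(P × X, X) satisfies R(p, x₀) = x₀ + f(p, R(p, x₀)) for all (p, x₀) ∈ P × X, and that for each p the map x₀ ↦ R(p, x₀) is a two-sided inverse of id − f(p, ·). Then for every (p, x₀), writing x = R(p, x₀): (i) the dual operator (∂R/∂x₀(p, x₀))* ∈ B(X*, X*) is the two-sided inverse of id − (∂f/∂x(p, x))* in B(X*, X*); and (ii) (∂R/∂p(p, x₀))* = (∂f/∂p(p, x))* ∘ (∂R/∂x₀(p, x₀))* in B(X*, P*). -/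
universe u v

lemma dualOp_comp {X Y Z : Type*} [NormedAddCommGroup X] [NormedSpace ℝ X]
    [NormedAddCommGroup Y] [NormedSpace ℝ Y] [NormedAddCommGroup Z] [NormedSpace ℝ Z]
    (A : Y →L[ℝ] Z) (B : X →L[ℝ] Y) :
    dualOp (A.comp B) = (dualOp B).comp (dualOp A) := by
  ext φ x; rfl

lemma dualOp_id {X : Type*} [NormedAddCommGroup X] [NormedSpace ℝ X] :
    dualOp (ContinuousLinearMap.id ℝ X) = ContinuousLinearMap.id ℝ (X →L[ℝ] ℝ) := by
  ext φ x; rfl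

lemma dualOp_sub {X Y : Type*} [NormedAddCommGroup X] [NormedSpace ℝ X]
    [NormedAddCommGroup Y] [NormedSpace ℝ Y] (A B : X →L[ℝ] Y) :
    dualOp (A - B) = dualOp A - dualOp B := by
  ext φ x; simp [dualOp]

/-- Let `f ∈ C¹(P × X, X)` and suppose `R ∈ C¹(P × X, X)` satisfies the
parametric machine equation `R(p, x₀) = x₀ + f(p, R(p, x₀))`, with `R(p, ·)` a two-sided
inverse of `id − f(p, ·)` for each `p`. Then, writing `x = R(p, x₀)`:
(i) `(∂R/∂x₀(p, x₀))*` is the two-sided inverse of `id − (∂f/∂x(p, x))*` in `B(X*, X*)`;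
(ii) `(∂R/∂p(p, x₀))* = (∂f/∂p(p, x))* ∘ (∂R/∂x₀(p, x₀))*` in `B(X*, P*)`. -/
theorem parametric_resolvent_dual_derivatives {P : Type u} {X : Type v}
    [NormedAddCommGroup P] [NormedSpace ℝ P]
    [NormedAddCommGroup X] [NormedSpace ℝ X]
    (f : P × X → X) (hf : ContDiff ℝ 1 f)
    (R : P × X → X) (hR : ContDiff ℝ 1 R)
    (hfix : ∀ (p : P) (x₀ : X), R (p, x₀) = x₀ + f (p, R (p, x₀)))
    (hinvl : ∀ p : P,
      Function.LeftInverse (fun x₀ => R (p, x₀)) (fun x => x - f (p, x)))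
    (hinvr : ∀ p : P,
      Function.RightInverse (fun x₀ => R (p, x₀)) (fun x => x - f (p, x)))
    (p : P) (x₀ : X) :
    ((ContinuousLinearMap.id ℝ (X →L[ℝ] ℝ) -
          dualOp (fderiv ℝ (fun y => f (p, y)) (R (p, x₀)))).comp
          (dualOp (fderiv ℝ (fun y => R (p, y)) x₀)) =
        ContinuousLinearMap.id ℝ (X →L[ℝ] ℝ) ∧
      (dualOp (fderiv ℝ (fun y => R (p, y)) x₀)).comp
          (ContinuousLinearMap.id ℝ (X →L[ℝ] ℝ) -
            dualOp (fderiv ℝ (fun y => f (p, y)) (R (p, x₀)))) =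
        ContinuousLinearMap.id ℝ (X →L[ℝ] ℝ)) ∧
    dualOp (fderiv ℝ (fun q => R (q, x₀)) p) =
      (dualOp (fderiv ℝ (fun q => f (q, R (p, x₀))) p)).comp
        (dualOp (fderiv ℝ (fun y => R (p, y)) x₀)) := by
  have hfd : Differentiable ℝ f := hf.differentiable one_ne_zero
  have hRd : Differentiable ℝ R := hR.differentiable one_ne_zero
  set x : X := R (p, x₀) with hx
  set F : (P × X) →L[ℝ] X := fderiv ℝ f (p, x) with hFdef
  set Rt : (P × X) →L[ℝ] X := fderiv ℝ R (p, x₀) with hRtdef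
  have hF : HasFDerivAt f F (p, x) := (hfd (p, x)).hasFDerivAt
  have hRt : HasFDerivAt R Rt (p, x₀) := (hRd (p, x₀)).hasFDerivAt
  set Df : X →L[ℝ] X := F.comp (ContinuousLinearMap.inr ℝ P X) with hDfdef
  set DxR : X →L[ℝ] X := Rt.comp (ContinuousLinearMap.inr ℝ P X) with hDxRdef
  set DpR : P →L[ℝ] X := Rt.comp (ContinuousLinearMap.inl ℝ P X) with hDpRdef
  set DpF : P →L[ℝ] X := F.comp (ContinuousLinearMap.inl ℝ P X) with hDpFdef
  -- partial derivatives
  have hDf : HasFDerivAt (fun y => f (p, y)) Df x :=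
    hF.comp x (hasFDerivAt_prodMk_right p x)
  have hDxR : HasFDerivAt (fun y => R (p, y)) DxR x₀ :=
    hRt.comp x₀ (hasFDerivAt_prodMk_right p x₀)
  have hDpR : HasFDerivAt (fun q => R (q, x₀)) DpR p :=
    hRt.comp p (hasFDerivAt_prodMk_left p x₀)
  have hDpF : HasFDerivAt (fun q => f (q, x)) DpF p :=
    hF.comp p (hasFDerivAt_prodMk_left p x)
  have hfDf : fderiv ℝ (fun y => f (p, y)) x = Df := hDf.fderiv
  have hfDxR : fderiv ℝ (fun y => R (p, y)) x₀ = DxR := hDxR.fderiv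
  have hfDpR : fderiv ℝ (fun q => R (q, x₀)) p = DpR := hDpR.fderiv
  have hfDpF : fderiv ℝ (fun q => f (q, x)) p = DpF := hDpF.fderiv
  -- Equation 1 : DxR = id + Df ∘ DxR
  have heq1 : DxR = ContinuousLinearMap.id ℝ X + Df.comp DxR := by
    have h1' : HasFDerivAt (fun y => y + f (p, R (p, y)))
        (ContinuousLinearMap.id ℝ X + Df.comp DxR) x₀ :=
      by have h := hDf.comp x₀ hDxR; exact (hasFDerivAt_id x₀).add h
    have hfun : (fun y => R (p, y)) = fun y => y + f (p, R (p, y)) :=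
      funext fun y => hfix p y
    rw [← hfun] at h1'
    exact hDxR.unique h1'
  have key1 : (ContinuousLinearMap.id ℝ X - Df).comp DxR = ContinuousLinearMap.id ℝ X := by
    rw [ContinuousLinearMap.sub_comp, ContinuousLinearMap.id_comp, sub_eq_iff_eq_add']
    exact heq1.trans (add_comm _ _)
  -- Equation 2 : DxR ∘ (id - Df) = id
  have key2 : DxR.comp (ContinuousLinearMap.id ℝ X - Df) = ContinuousLinearMap.id ℝ X := by
    have hg : HasFDerivAt (fun z => z - f (p, z)) (ContinuousLinearMap.id ℝ X - Df) x :=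
      (hasFDerivAt_id x).sub hDf
    have hgx : x - f (p, x) = x₀ := by
      rw [sub_eq_iff_eq_add]; exact hfix p x₀
    have hout : HasFDerivAt (fun y => R (p, y)) DxR (x - f (p, x)) := by
      rw [hgx]; exact hDxR
    have hcomp : HasFDerivAt (fun z => R (p, z - f (p, z)))
        (DxR.comp (ContinuousLinearMap.id ℝ X - Df)) x := by have h := hout.comp x hg; exact h
    have hfun : (fun z => R (p, z - f (p, z))) = fun z => z := funext fun z => hinvl p z
    rw [hfun] at hcomp
    exact hcomp.unique (hasFDerivAt_id x)
  -- Equation 3 : DpR = DpF + Df ∘ DpR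
  have heq3 : DpR = DpF + Df.comp DpR := by
    have hin : HasFDerivAt (fun q => (q, R (q, x₀)))
        ((ContinuousLinearMap.id ℝ P).prod DpR) p :=
      HasFDerivAt.prodMk (hasFDerivAt_id p) hDpR
    have hcomp : HasFDerivAt (fun q => f (q, R (q, x₀)))
        (F.comp ((ContinuousLinearMap.id ℝ P).prod DpR)) p := hF.comp p hin
    have hsum : HasFDerivAt (fun q => x₀ + f (q, R (q, x₀)))
        (F.comp ((ContinuousLinearMap.id ℝ P).prod DpR)) p := by
      exact hcomp.const_add x₀
    have hfun : (fun q => R (q, x₀)) = fun q => x₀ + f (q, R (q, x₀)) :=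
      funext fun q => hfix q x₀
    rw [← hfun] at hsum
    have hu : DpR = F.comp ((ContinuousLinearMap.id ℝ P).prod DpR) := hDpR.unique hsum
    have hsplit : F.comp ((ContinuousLinearMap.id ℝ P).prod DpR) = DpF + Df.comp DpR := by
      ext q
      simp [hDpFdef, hDfdef, ContinuousLinearMap.comp_apply]
      rw [← ContinuousLinearMap.map_add]
      congr 1
      simp [Prod.ext_iff]
    exact hu.trans hsplit
  -- DpR = DxR ∘ DpF
  have key3 : DpR = DxR.comp DpF := by
    have h : (ContinuousLinearMap.id ℝ X - Df).comp DpR = DpF := by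
      rw [ContinuousLinearMap.sub_comp, ContinuousLinearMap.id_comp, sub_eq_iff_eq_add]
      exact heq3
    calc DpR = (DxR.comp (ContinuousLinearMap.id ℝ X - Df)).comp DpR := by
              rw [key2, ContinuousLinearMap.id_comp]
      _ = DxR.comp ((ContinuousLinearMap.id ℝ X - Df).comp DpR) := by
              rw [ContinuousLinearMap.comp_assoc]
      _ = DxR.comp DpF := by rw [h]
  -- Conclude by dualizing
  rw [hfDf, hfDxR, hfDpR, hfDpF]
  refine ⟨⟨?_, ?_⟩, ?_⟩
  · rw [← dualOp_id (X := X), ← dualOp_sub, ← dualOp_comp, key2, dualOp_id]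
  · rw [← dualOp_id (X := X), ← dualOp_sub, ← dualOp_comp, key1, dualOp_id]
  · rw [key3, dualOp_comp]
end

section
/- Let X be a real normed vector space, f ∈ C¹(X, X), and let V, W be closed linear subspaces of X. Then the following are equivalent: (i) for all x ∈ X and all v ∈ V, f(x + v) − f(x) ∈ W; (ii) for all x ∈ X, the Fréchet derivative Df(x) maps V into W. -/
universe u

/-- Let `f ∈ C¹(X, X)` and let `V, W` be closed linear subspaces of `X`.
Then `f(x + v) − f(x) ∈ W` for all `x ∈ X, v ∈ V` if and only if the Fréchet derivative
`Df(x)` maps `V` into `W` for all `x ∈ X`. -/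
theorem increment_mem_iff_fderiv_maps_into {X : Type u}
    [NormedAddCommGroup X] [NormedSpace ℝ X]
    (f : X → X) (hf : ContDiff ℝ 1 f)
    (V W : Submodule ℝ X)
    (hV : IsClosed (V : Set X)) (hW : IsClosed (W : Set X)) :
    (∀ x : X, ∀ v ∈ V, f (x + v) - f x ∈ W) ↔
      (∀ x : X, ∀ v ∈ V, fderiv ℝ f x v ∈ W) := by
  have hdiff : Differentiable ℝ f := hf.differentiable one_ne_zero
  constructor
  · intro h x v hv
    have hline : HasDerivAt (fun t : ℝ => x + t • v) v 0 := by
      have := ((hasDerivAt_id (0 : ℝ)).smul_const v).const_add x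
      simpa using this
    have hg : HasDerivAt (fun t : ℝ => f (x + t • v)) (fderiv ℝ f x v) 0 := by
      have := (hdiff (x + (0:ℝ) • v)).hasFDerivAt.comp_hasDerivAt 0 hline
      simpa [Function.comp_def] using this
    rw [hasDerivAt_iff_tendsto_slope] at hg
    refine hW.mem_of_tendsto hg ?_
    filter_upwards [self_mem_nhdsWithin] with t ht
    have : f (x + t • v) - f x ∈ W := h x (t • v) (V.smul_mem t hv)
    simpa [slope_def_module] using W.smul_mem (t - 0)⁻¹ this
  · intro h x v hv
    haveI : IsClosed (W : Set X) := hW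
    let q : X →L[ℝ] X ⧸ W := ⟨W.mkQ, continuous_quot_mk⟩
    set g : ℝ → X ⧸ W := fun t => q (f (x + t • v)) with hgdef
    have hg : ∀ t : ℝ, HasDerivAt g 0 t := by
      intro t
      have hline : HasDerivAt (fun s : ℝ => x + s • v) v t := by
        have := ((hasDerivAt_id t).smul_const v).const_add x
        simpa using this
      have hcomp : HasDerivAt (fun s : ℝ => f (x + s • v))
          (fderiv ℝ f (x + t • v) v) t :=
        (hdiff (x + t • v)).hasFDerivAt.comp_hasDerivAt t hline
      have := q.hasFDerivAt.comp_hasDerivAt t hcomp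
      have hz : q (fderiv ℝ f (x + t • v) v) = 0 :=
        (Submodule.Quotient.mk_eq_zero W).mpr (h (x + t • v) v hv)
      rw [hz] at this
      exact this
    have hconst : g 1 = g 0 :=
      is_const_of_deriv_eq_zero (fun t => (hg t).differentiableAt)
        (fun t => (hg t).deriv) 1 0
    have : Submodule.Quotient.mk (f (x + v)) = (Submodule.Quotient.mk (f x) : X ⧸ W) := by
      have h2 := hconst
      simp only [hgdef, one_smul, zero_smul, add_zero] at h2
      exact h2
    exact (Submodule.Quotient.eq W).mp this
end

section
/- Let X be a real normed vector space and f₁, f₂ ∈ C¹(X, X). Then f₁ does not depend on f₂ (i.e., f₁(x₁ + λ f₂(x₂)) = f₁(x₁) for all x₁, x₂ ∈ X and λ ∈ ℝ) if and only if (Df₁(x₁))(f₂(x₂)) = 0 for all x₁, x₂ ∈ X. -/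
universe u

lemma line_hasDerivAt {X : Type u} [NormedAddCommGroup X] [NormedSpace ℝ X]
    (f : X → X) (hf : Differentiable ℝ f) (x v : X) (t : ℝ) :
    HasDerivAt (fun s : ℝ => f (x + s • v)) (fderiv ℝ f (x + t • v) v) t := by
  have h1 : HasDerivAt (fun s : ℝ => x + s • v) v t := by
    simpa using ((hasDerivAt_id t).smul_const v).const_add x
  have h2 := (hf (x + t • v)).hasFDerivAt
  exact h2.comp_hasDerivAt t h1

/-- For `f₁, f₂ ∈ C¹(X, X)`, `f₁` does not depend on `f₂` if and only if
`(Df₁(x₁))(f₂(x₂)) = 0` for all `x₁, x₂ ∈ X`. -/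
theorem not_depend_iff_fderiv_vanishes {X : Type u}
    [NormedAddCommGroup X] [NormedSpace ℝ X]
    (f₁ f₂ : X → X) (hf₁ : ContDiff ℝ 1 f₁) (hf₂ : ContDiff ℝ 1 f₂) :
    DoesNotDependOn f₁ f₂ ↔ ∀ x₁ x₂ : X, fderiv ℝ f₁ x₁ (f₂ x₂) = 0 := by
  have hdiff : Differentiable ℝ f₁ := hf₁.differentiable one_ne_zero
  constructor
  · intro h x₁ x₂
    have hd := line_hasDerivAt f₁ hdiff x₁ (f₂ x₂) 0
    have heq : (fun s : ℝ => f₁ (x₁ + s • f₂ x₂)) = fun _ => f₁ x₁ := by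
      funext s; exact h x₁ x₂ s
    rw [heq] at hd
    have := hd.deriv
    simpa [deriv_const] using this.symm
  · intro h x₁ x₂ lam
    have hg : Differentiable ℝ (fun s : ℝ => f₁ (x₁ + s • f₂ x₂)) :=
      fun t => (line_hasDerivAt f₁ hdiff x₁ (f₂ x₂) t).differentiableAt
    have hg' : ∀ t : ℝ, deriv (fun s : ℝ => f₁ (x₁ + s • f₂ x₂)) t = 0 := by
      intro t
      rw [(line_hasDerivAt f₁ hdiff x₁ (f₂ x₂) t).deriv]
      exact h _ _
    have := is_const_of_deriv_eq_zero hg hg' lam 0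
    simpa using this
end

section
/- Let X be a real normed vector space and f ∈ C¹(X, X). If f does not depend on itself (i.e., f(x₁ + λ f(x₂)) = f(x₁) for all x₁, x₂ ∈ X and λ ∈ ℝ), then id − f is bijective with two-sided inverse id + f: (id − f) ∘ (id + f) = id and (id + f) ∘ (id − f) = id. In particular, f is a machine with resolvent R_f = id + f. -/
universe u

/-- If `f ∈ C¹(X, X)` does not depend on itself (i.e.
`f(x₁ + λ f(x₂)) = f(x₁)` for all `x₁, x₂, λ`), then `id − f` is bijective with two-sided
inverse `id + f`: `(id − f) ∘ (id + f) = id` and `(id + f) ∘ (id − f) = id`. In particular,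
`f` is a machine with resolvent `R_f = id + f`. -/
theorem not_depend_self_implies_machine {X : Type u}
    [NormedAddCommGroup X] [NormedSpace ℝ X]
    (f : X → X) (hf : ContDiff ℝ 1 f)
    (hdep : ∀ (x₁ x₂ : X) (lam : ℝ), f (x₁ + lam • f x₂) = f x₁) :
    (∀ x, (x + f x) - f (x + f x) = x) ∧
    (∀ x, (x - f x) + f (x - f x) = x) ∧
    IsMachine f := by
  have hplus : ∀ x : X, f (x + f x) = f x := by
    intro x
    have := hdep x x 1
    simpa using this
  have hminus : ∀ x : X, f (x - f x) = f x := by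
    intro x
    have := hdep x x (-1)
    simpa [sub_eq_add_neg] using this
  refine ⟨fun x => by rw [hplus x]; abel, fun x => by rw [hminus x]; abel, ?_⟩
  intro X₀ _ _ g hg
  refine ⟨fun t => g t + f (g t), ⟨hg.add (hf.comp hg), fun t => ?_⟩, ?_⟩
  · rw [hplus (g t)]
  · rintro h ⟨-, hh⟩
    funext t
    have : f (h t) = f (g t) := by
      conv_lhs => rw [hh t]
      have := hdep (g t) (h t) 1
      simpa using this
    rw [hh t, this]
end

section
/- Let X be a real normed vector space and let f : X → X be a continuous linear operator. If f^{d+1} = 0, then the sequence of kernels X ⊇ ker f^d ⊇ ker f^{d−1} ⊇ … ⊇ ker f ⊇ ker f⁰ = 0 is a depth cofiltration of length d for f. Conversely, if f admits a depth cofiltration of length d, then f^{d+1} = 0. In particular, a continuous linear operator has finite depth if and only if it is nilpotent. -/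
universe u

section Aux

variable {X : Type u} [NormedAddCommGroup X] [NormedSpace ℝ X]

lemma aux_ker_mono (f : X →L[ℝ] X) {k m : ℕ} (h : k ≤ m) :
    LinearMap.ker ((f ^ k : X →L[ℝ] X) : X →ₗ[ℝ] X) ≤ LinearMap.ker ((f ^ m : X →L[ℝ] X) : X →ₗ[ℝ] X) := by
  intro x hx
  rw [LinearMap.mem_ker, ContinuousLinearMap.coe_coe] at hx ⊢
  have : f ^ m = f ^ (m - k) * f ^ k := by rw [← pow_add, Nat.sub_add_cancel h]
  rw [this, ContinuousLinearMap.mul_apply, hx, map_zero]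

lemma aux_fwd (f : X →L[ℝ] X) (d : ℕ) (h : f ^ (d + 1) = 0) :
    IsDepthCofiltration (fun x => f x) d
      (fun i : Fin (d + 1) => LinearMap.ker ((f ^ (d - (i : ℕ)) : X →L[ℝ] X) : X →ₗ[ℝ] X)) := by
  refine ⟨fun i => ContinuousLinearMap.isClosed_ker _, ?_, ?_, ?_, ?_⟩
  · intro i j hij
    exact aux_ker_mono f (Nat.sub_le_sub_left hij d)
  · ext x
    simp [ContinuousLinearMap.one_apply]
  · intro x
    simp only [Submodule.mkQ_apply, Submodule.Quotient.mk_eq_zero, LinearMap.mem_ker,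
      Fin.val_zero, Nat.sub_zero]
    have : (f ^ d) (f x) = (f ^ (d + 1)) x := by rw [pow_succ, ContinuousLinearMap.mul_apply]
    exact (Submodule.Quotient.mk_eq_zero _).2 (by rw [LinearMap.mem_ker, ContinuousLinearMap.coe_coe, this, h]; rfl)
  · intro i
    have hle : LinearMap.ker ((f ^ (d - (i.castSucc : ℕ)) : X →L[ℝ] X) : X →ₗ[ℝ] X) ≤
        LinearMap.ker (((LinearMap.ker ((f ^ (d - (i.succ : ℕ)) : X →L[ℝ] X) : X →ₗ[ℝ] X)).mkQ).comp f.toLinearMap) := by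
      intro x hx
      simp only [LinearMap.mem_ker, LinearMap.comp_apply, Submodule.mkQ_apply,
        Submodule.Quotient.mk_eq_zero, LinearMap.mem_ker] at hx ⊢
      have h1 : d - (i : ℕ) = (d - ((i : ℕ) + 1)) + 1 := by omega
      simp only [Fin.coe_castSucc] at hx
      rw [Fin.val_succ]
      rw [h1, pow_succ, ContinuousLinearMap.coe_coe, ContinuousLinearMap.mul_apply] at hx
      exact hx
    set ftL := (LinearMap.ker ((f ^ (d - (i.castSucc : ℕ)) : X →L[ℝ] X) : X →ₗ[ℝ] X)).liftQ
      (((LinearMap.ker ((f ^ (d - (i.succ : ℕ)) : X →L[ℝ] X) : X →ₗ[ℝ] X)).mkQ).comp f.toLinearMap) hle with hftL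
    have hcont : Continuous ftL := by
      rw [(Submodule.isOpenQuotientMap_mkQ _).isQuotientMap.continuous_iff]
      have : (ftL ∘ (LinearMap.ker ((f ^ (d - (i.castSucc : ℕ)) : X →L[ℝ] X) : X →ₗ[ℝ] X)).mkQ) =
          fun x => (LinearMap.ker ((f ^ (d - (i.succ : ℕ)) : X →L[ℝ] X) : X →ₗ[ℝ] X)).mkQ (f x) := rfl
      rw [this]
      exact (Submodule.isOpenQuotientMap_mkQ _).continuous.comp f.continuous
    letI : NormedAddCommGroup (X ⧸ LinearMap.ker ((f ^ (d - (i.castSucc : ℕ)) : X →L[ℝ] X) : X →ₗ[ℝ] X)) :=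
      Submodule.Quotient.normedAddCommGroup _
        (hS := ContinuousLinearMap.isClosed_ker _)
    letI : NormedAddCommGroup (X ⧸ LinearMap.ker ((f ^ (d - (i.succ : ℕ)) : X →L[ℝ] X) : X →ₗ[ℝ] X)) :=
      Submodule.Quotient.normedAddCommGroup _
        (hS := ContinuousLinearMap.isClosed_ker _)
    let g : (X ⧸ LinearMap.ker ((f ^ (d - (i.castSucc : ℕ)) : X →L[ℝ] X) : X →ₗ[ℝ] X)) →L[ℝ]
        (X ⧸ LinearMap.ker ((f ^ (d - (i.succ : ℕ)) : X →L[ℝ] X) : X →ₗ[ℝ] X)) := ⟨ftL, hcont⟩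
    exact ⟨g, g.contDiff, fun x => rfl⟩

lemma aux_bwd (f : X →L[ℝ] X) (d : ℕ) (V : Fin (d + 1) → Submodule ℝ X)
    (h : IsDepthCofiltration (fun x => f x) d V) : f ^ (d + 1) = 0 := by
  obtain ⟨hV, _, hlast, h0, hstep⟩ := h
  have key : ∀ i : Fin (d + 1), ∀ x, (f ^ ((i : ℕ) + 1)) x ∈ V i := by
    intro i
    induction i using Fin.induction with
    | zero =>
      intro x
      have := h0 x
      simp only [Submodule.mkQ_apply, Submodule.Quotient.mk_eq_zero] at this
      simpa [pow_one] using this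
    | succ i ih =>
      obtain ⟨ft, _, heq⟩ := hstep i
      intro x
      have hz : ft 0 = 0 := by
        have := heq 0
        simpa using this.symm
      have h1 : (V i.castSucc).mkQ ((f ^ ((i : ℕ) + 1)) x) = 0 := by
        simpa [Submodule.Quotient.mk_eq_zero] using ih x
      have h3 : (V i.succ).mkQ ((f ^ ((i.succ : ℕ) + 1)) x) = 0 := by
        have hp : (f ^ ((i.succ : ℕ) + 1)) x = f ((f ^ ((i : ℕ) + 1)) x) := by
          rw [Fin.val_succ, pow_succ', ContinuousLinearMap.mul_apply]
        rw [hp, heq, h1, hz]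
      simpa [Submodule.Quotient.mk_eq_zero] using h3
  ext x
  have := key (Fin.last d) x
  rw [hlast, Submodule.mem_bot] at this
  simpa using this

end Aux

/-- Let `f : X → X` be a continuous linear operator. If `f^(d+1) = 0`, then
the sequence of kernels `X ⊇ ker f^d ⊇ ker f^{d−1} ⊇ … ⊇ ker f ⊇ ker f⁰ = 0` is a depth
cofiltration of length `d` for `f`. Conversely, if `f` admits a depth cofiltration of length
`d`, then `f^(d+1) = 0`. In particular, a continuous linear operator has finite depth if and
only if it is nilpotent. -/
theorem linear_finite_depth_iff_nilpotent {X : Type u}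
    [NormedAddCommGroup X] [NormedSpace ℝ X]
    (f : X →L[ℝ] X) (d : ℕ) :
    (f ^ (d + 1) = 0 →
      IsDepthCofiltration (fun x => f x) d
        (fun i : Fin (d + 1) => LinearMap.ker ((f ^ (d - (i : ℕ)) : X →L[ℝ] X) : X →ₗ[ℝ] X))) ∧
    ((∃ V : Fin (d + 1) → Submodule ℝ X, IsDepthCofiltration (fun x => f x) d V) →
      f ^ (d + 1) = 0) ∧
    ((∃ (d' : ℕ) (V : Fin (d' + 1) → Submodule ℝ X),
        IsDepthCofiltration (fun x => f x) d' V) ↔ ∃ n : ℕ, f ^ n = 0) := by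
  refine ⟨aux_fwd f d, fun ⟨V, hV⟩ => aux_bwd f d V hV, ?_, ?_⟩
  · rintro ⟨d', V, hV⟩
    exact ⟨d' + 1, aux_bwd f d' V hV⟩
  · rintro ⟨n, hn⟩
    exact ⟨n, _, aux_fwd f n (by rw [pow_succ, hn, zero_mul])⟩
end
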